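/- arXiv:2304.08070 — 13 statements merged into one kernel-verified Lean document; each statement's English description precedes it below -/
import Mathlib

section
/- Let G be a group acting on a set X and let a₁, a₂ be elements of G. Suppose there exist pairwise disjoint nonempty subsets A₁, B₁, A₂, B₂ of X such that aᵢ(X \ Aᵢ) ⊆ Bᵢ for i = 1, 2. Then a₁ and a₂ generate a free group of rank 2. -/
/-! Mathlib's ping-pong lemma applies with `Xᵢ = Bᵢ` and `Yᵢ = Aᵢ`; its second hypothesis
`aᵢ⁻¹ • Bᵢᶜ ⊆ Aᵢ` is the contrapositive of `aᵢ • Aᵢᶜ ⊆ Bᵢ`. -/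

open scoped Pointwise Function

universe u v

theorem Set.inv_smul_compl_subset_of_smul_compl_subset {G α : Type*} [Group G] [MulAction G α]
    {a : G} {s t : Set α} (h : a • sᶜ ⊆ t) : a⁻¹ • tᶜ ⊆ s := by
  rwa [Set.smul_set_compl, Set.compl_subset_comm, ← Set.smul_set_subset_iff_subset_inv_smul_set]

/- `FreeGroup.injective_lift_of_ping_pong` puts `ι` and `G` in the same universe; lifting `ι`
through `ULift` removes that restriction. -/
theorem FreeGroup.injective_lift_of_ping_pong' {ι : Type u} [Nontrivial ι] {G : Type max u v}
    [Group G] {α : Type*} [MulAction G α] (a : ι → G) (X Y : ι → Set α)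
    (hXnonempty : ∀ i, (X i).Nonempty) (hXdisj : Pairwise (Disjoint on X))
    (hYdisj : Pairwise (Disjoint on Y)) (hXYdisj : ∀ i j, Disjoint (X i) (Y j))
    (hX : ∀ i, a i • (Y i)ᶜ ⊆ X i) : Function.Injective (FreeGroup.lift a) := by
  have hlift : FreeGroup.lift a = (FreeGroup.lift (a ∘ ULift.down.{v})).comp (map ULift.up) := by
    ext; simp
  rw [hlift, MonoidHom.coe_comp]
  exact (FreeGroup.injective_lift_of_ping_pong _ (X ∘ ULift.down) (Y ∘ ULift.down)
    (fun _ => hXnonempty _) (hXdisj.comp_of_injective ULift.down_injective)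
    (hYdisj.comp_of_injective ULift.down_injective) (fun _ _ => hXYdisj _ _) (fun _ => hX _)
    (fun _ => Set.inv_smul_compl_subset_of_smul_compl_subset (hX _))).comp
    (map_injective ULift.up_injective)

theorem stmt0_general {G X : Type*} [Group G] [MulAction G X]
    (a₁ a₂ : G) (A₁ B₁ A₂ B₂ : Set X)
    (hne₂ : B₁.Nonempty) (hne₄ : B₂.Nonempty)
    (h₁₂ : Disjoint A₁ B₁) (h₁₃ : Disjoint A₁ A₂) (h₁₄ : Disjoint A₁ B₂)
    (h₂₃ : Disjoint B₁ A₂) (h₂₄ : Disjoint B₁ B₂) (h₃₄ : Disjoint A₂ B₂)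
    (ha₁ : ∀ x : X, x ∉ A₁ → a₁ • x ∈ B₁)
    (ha₂ : ∀ x : X, x ∉ A₂ → a₂ • x ∈ B₂) :
    Function.Injective ⇑(FreeGroup.lift (fun i : Fin 2 => if i = 0 then a₁ else a₂)) := by
  apply FreeGroup.injective_lift_of_ping_pong' _ ![B₁, B₂] ![A₁, A₂]
  · simp [Fin.forall_fin_two, hne₂, hne₄]
  · simp [Pairwise, Fin.forall_fin_two, Function.onFun, h₂₄, h₂₄.symm]
  · simp [Pairwise, Fin.forall_fin_two, Function.onFun, h₁₃, h₁₃.symm]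
  · simp [Fin.forall_fin_two, h₁₂.symm, h₂₃, h₁₄.symm, h₃₄.symm]
  · simp only [Fin.forall_fin_two, Set.smul_set_subset_iff]
    exact ⟨ha₁, ha₂⟩

/-- Ping-pong lemma: if `a₁, a₂` act on `X` with pairwise disjoint nonempty sets
`A₁, B₁, A₂, B₂` such that `aᵢ (X \ Aᵢ) ⊆ Bᵢ`, then `a₁, a₂` generate a free
group of rank 2. -/
theorem stmt0 {G X : Type*} [Group G] [MulAction G X]
    (a₁ a₂ : G) (A₁ B₁ A₂ B₂ : Set X)
    (hne₁ : A₁.Nonempty) (hne₂ : B₁.Nonempty) (hne₃ : A₂.Nonempty) (hne₄ : B₂.Nonempty)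
    (h₁₂ : Disjoint A₁ B₁) (h₁₃ : Disjoint A₁ A₂) (h₁₄ : Disjoint A₁ B₂)
    (h₂₃ : Disjoint B₁ A₂) (h₂₄ : Disjoint B₁ B₂) (h₃₄ : Disjoint A₂ B₂)
    (ha₁ : ∀ x : X, x ∉ A₁ → a₁ • x ∈ B₁)
    (ha₂ : ∀ x : X, x ∉ A₂ → a₂ • x ∈ B₂) :
    Function.Injective ⇑(FreeGroup.lift (fun i : Fin 2 => if i = 0 then a₁ else a₂)) :=
  stmt0_general a₁ a₂ A₁ B₁ A₂ B₂ hne₂ hne₄ h₁₂ h₁₃ h₁₄ h₂₃ h₂₄ h₃₄ ha₁ ha₂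
end

section
/- Let G be a group acting on a set X such that every orbit is infinite. Then for any finite subsets A and B of X, there exists g ∈ G such that g(A) ∩ B = ∅. -/
/-
Suppose every translate `g • A` meets `B`. Then `G` is the union of the finitely many sets
`{g | g • a = b}` with `a ∈ A`, `b ∈ B`, each of which is empty or a left coset of the
stabilizer of `a`. By B. H. Neumann's lemma one of these stabilizers has finite index, so the
orbit of the corresponding point is finite.
-/

open MulAction Pointwise

namespace MulAction

variable {G X : Type*} [Group G] [MulAction G X]

theorem finite_orbit_of_finiteIndex_stabilizer {x : X} (h : (stabilizer G x).FiniteIndex) :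
    (orbit G x).Finite :=
  Set.finite_of_ncard_ne_zero (index_stabilizer G x ▸ h.index_ne_zero)

theorem setOf_smul_eq_smul_eq_smul_stabilizer (g : G) (x : X) :
    {h : G | h • x = g • x} = g • (stabilizer G x : Set G) := by
  ext h
  rw [Set.mem_ofPred_eq, Set.mem_smul_set_iff_inv_smul_mem, SetLike.mem_coe, mem_stabilizer_iff,
    smul_eq_mul, mul_smul, inv_smul_eq_iff]

theorem exists_finiteIndex_stabilizer_of_forall_exists_smul_mem {A B : Set X}
    (hA : A.Finite) (hB : B.Finite) (h : ∀ g : G, ∃ a ∈ A, g • a ∈ B) :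
    ∃ a ∈ A, (stabilizer G a).FiniteIndex := by
  classical
  set s := (hA.toFinset ×ˢ hB.toFinset).filter fun p : X × X => p.2 ∈ orbit G p.1
  have hs : ∀ p ∈ s, ∃ g : G, g • p.1 = p.2 := fun p hp => (Finset.mem_filter.mp hp).2
  choose! g₀ hg₀ using hs
  have hcovers : ⋃ p ∈ s, g₀ p • (stabilizer G p.1 : Set G) = Set.univ := by
    refine Set.eq_univ_of_forall fun g => ?_
    obtain ⟨a, ha, hb⟩ := h g
    have hp : (a, g • a) ∈ s := by simp [s, ha, hb]
    rw [Set.mem_iUnion₂]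
    refine ⟨_, hp, ?_⟩
    rw [← setOf_smul_eq_smul_eq_smul_stabilizer, Set.mem_ofPred_eq, hg₀ _ hp]
  obtain ⟨p, hp, hfi⟩ := Subgroup.exists_finiteIndex_of_leftCoset_cover hcovers
  exact ⟨p.1, hA.mem_toFinset.mp (Finset.mem_product.mp (Finset.mem_filter.mp hp).1).1, hfi⟩

theorem exists_disjoint_smul_of_infinite_orbit {A B : Set X} (hA : A.Finite) (hB : B.Finite)
    (horb : ∀ a ∈ A, (orbit G a).Infinite) : ∃ g : G, Disjoint (g • A) B := by
  by_contra! h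
  obtain ⟨a, ha, hfi⟩ := exists_finiteIndex_stabilizer_of_forall_exists_smul_mem hA hB fun g => by
    obtain ⟨_, ⟨a, ha, rfl⟩, hb⟩ := Set.not_disjoint_iff.mp (h g)
    exact ⟨a, ha, hb⟩
  exact horb a ha (finite_orbit_of_finiteIndex_stabilizer hfi)

end MulAction

/-- If every orbit of a group action is infinite, any finite set can be moved
off any other finite set. -/
theorem stmt1 {G X : Type*} [Group G] [MulAction G X]
    (horb : ∀ x : X, (MulAction.orbit G x).Infinite)
    (A B : Set X) (hA : A.Finite) (hB : B.Finite) :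
    ∃ g : G, (fun x => g • x) '' A ∩ B = ∅ := by
  obtain ⟨g, hg⟩ := exists_disjoint_smul_of_infinite_orbit hA hB fun a _ => horb a
  exact ⟨g, by rwa [Set.image_smul, ← Set.disjoint_iff_inter_eq_empty]⟩
end

section
/- Let g be a homeomorphism of a compact set K ⊆ ℝ, and let [a,b] be a closed interval containing no break pair of g. Then g restricted to [a,b] ∩ K is a monotone bijection onto [g(a), g(b)] ∩ K (where the interval [g(a),g(b)] is taken with appropriate orientation); in particular g([a,b] ∩ K) = [g(a), g(b)] ∩ K. -/
/-- `a` and `b` are the two endpoints of a gap (bounded connected component) of `ℝ \ K`. -/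
def IsGap (K : Set ℝ) (a b : ℝ) : Prop :=
  a ∈ K ∧ b ∈ K ∧ a < b ∧ Set.Ioo a b ∩ K = ∅

/-- `{a, b}` is a break pair of the homeomorphism `g` of `K`: it bounds a gap of
`ℝ \ K` but its image does not. -/
def IsBreakPair (K : Set ℝ) (g : K ≃ₜ K) (a b : K) : Prop :=
  (IsGap K a b ∨ IsGap K b a) ∧
    ¬(IsGap K (g a) (g b) ∨ IsGap K (g b) (g a))

/-!
Extend `g` across every gap `(c, d)` of `K` inside `[a, b]` by the affine map onto the segment
between `g c` and `g d`. Since `g` sends these gaps to gaps, the extension maps each of them into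
an image gap, so it stays injective and sends no point outside `K` into `K`; it is continuous
because `g` is continuous and bounded on `K`. A continuous injective map of `[a, b]` is strictly
monotone, and by the intermediate value theorem its image is the interval between `g a` and
`g b`; the points of that interval lying in `K` are exactly the images of `[a, b] ∩ K`.
-/

open Set AffineMap

namespace IsGap

variable {K : Set ℝ} {u v p : ℝ}

lemma notMem (h : IsGap K u v) (hp : p ∈ Ioo u v) : p ∉ K :=
  fun hpK => eq_empty_iff_forall_notMem.1 h.2.2.2 p ⟨hp, hpK⟩

lemma le_left_of_mem (h : IsGap K u v) (hp : p ∈ K) (hpv : p < v) : p ≤ u :=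
  le_of_not_gt fun hup => h.notMem ⟨hup, hpv⟩ hp

lemma right_le_of_mem (h : IsGap K u v) (hp : p ∈ K) (hup : u < p) : v ≤ p :=
  le_of_not_gt fun hpv => h.notMem ⟨hup, hpv⟩ hp

lemma eq_of_mem_Ioo {u' v' x : ℝ} (h : IsGap K u v) (h' : IsGap K u' v') (hx : x ∈ Ioo u v)
    (hx' : x ∈ Ioo u' v') : u = u' ∧ v = v' :=
  ⟨le_antisymm (h'.le_left_of_mem h.1 (hx.1.trans hx'.2))
      (h.le_left_of_mem h'.1 (hx'.1.trans hx.2)),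
    le_antisymm (h.right_le_of_mem h'.2.1 (hx.1.trans hx'.2))
      (h'.right_le_of_mem h.2.1 (hx'.1.trans hx.2))⟩

end IsGap

def IsGapPair (K : Set ℝ) (u v : ℝ) : Prop := IsGap K u v ∨ IsGap K v u

namespace IsGapPair

variable {K : Set ℝ} {u v p : ℝ}

lemma ne (h : IsGapPair K u v) : u ≠ v :=
  h.elim (fun h => h.2.2.1.ne) fun h => h.2.2.1.ne'

lemma notMem_of_mem_uIoo (h : IsGapPair K u v) (hp : p ∈ uIoo u v) : p ∉ K := by
  rcases h with h | h
  · exact h.notMem (uIoo_of_lt h.2.2.1 ▸ hp)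
  · exact h.notMem (uIoo_of_gt h.2.2.1 ▸ hp)

lemma eq_or_eq_swap_of_mem_uIoo {u' v' x : ℝ} (h : IsGapPair K u v) (h' : IsGapPair K u' v')
    (hx : x ∈ uIoo u v) (hx' : x ∈ uIoo u' v') : (u = u' ∧ v = v') ∨ (u = v' ∧ v = u') := by
  rcases h with h | h <;> rcases h' with h' | h'
  · exact .inl (h.eq_of_mem_Ioo h' (uIoo_of_lt h.2.2.1 ▸ hx) (uIoo_of_lt h'.2.2.1 ▸ hx'))
  · exact .inr (h.eq_of_mem_Ioo h' (uIoo_of_lt h.2.2.1 ▸ hx) (uIoo_of_gt h'.2.2.1 ▸ hx'))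
  · exact .inr (h.eq_of_mem_Ioo h' (uIoo_of_gt h.2.2.1 ▸ hx) (uIoo_of_lt h'.2.2.1 ▸ hx')).symm
  · exact .inl (h.eq_of_mem_Ioo h' (uIoo_of_gt h.2.2.1 ▸ hx) (uIoo_of_gt h'.2.2.1 ▸ hx')).symm

end IsGapPair

section GapEndpoints

variable (K : Set ℝ)

noncomputable def gapLeft (a t : ℝ) : ℝ := sSup (K ∩ Icc a t)

noncomputable def gapRight (b t : ℝ) : ℝ := sInf (K ∩ Icc t b)

variable {K} {a b c d t : ℝ}

lemma isGreatest_gapLeft (hK : IsCompact K) (ha : a ∈ K) (hat : a ≤ t) :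
    IsGreatest (K ∩ Icc a t) (gapLeft K a t) :=
  (hK.inter_right isClosed_Icc).isGreatest_sSup ⟨a, ha, le_rfl, hat⟩

lemma isLeast_gapRight (hK : IsCompact K) (hb : b ∈ K) (htb : t ≤ b) :
    IsLeast (K ∩ Icc t b) (gapRight K b t) :=
  (hK.inter_right isClosed_Icc).isLeast_sInf ⟨b, hb, htb, le_rfl⟩

lemma gapLeft_mem (hK : IsCompact K) (ha : a ∈ K) (ht : t ∈ Icc a b) :
    gapLeft K a t ∈ K ∩ Icc a b :=
  have h := (isGreatest_gapLeft hK ha ht.1).1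
  ⟨h.1, h.2.1, h.2.2.trans ht.2⟩

lemma gapRight_mem (hK : IsCompact K) (hb : b ∈ K) (ht : t ∈ Icc a b) :
    gapRight K b t ∈ K ∩ Icc a b :=
  have h := (isLeast_gapRight hK hb ht.2).1
  ⟨h.1, ht.1.trans h.2.1, h.2.2⟩

lemma gapLeft_eq_self (ht : t ∈ K) (hat : a ≤ t) : gapLeft K a t = t :=
  IsGreatest.csSup_eq ⟨⟨ht, hat, le_rfl⟩, fun _ hk => hk.2.2⟩

lemma gapRight_eq_self (ht : t ∈ K) (htb : t ≤ b) : gapRight K b t = t :=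
  IsLeast.csInf_eq ⟨⟨ht, le_rfl, htb⟩, fun _ hk => hk.2.1⟩

lemma gapLeft_eq_of_isGap (h : IsGap K c d) (hac : a ≤ c) (ht : t ∈ Ico c d) :
    gapLeft K a t = c :=
  IsGreatest.csSup_eq
    ⟨⟨h.1, hac, ht.1⟩, fun _ hk => h.le_left_of_mem hk.1 (hk.2.2.trans_lt ht.2)⟩

lemma gapRight_eq_of_isGap (h : IsGap K c d) (hdb : d ≤ b) (ht : t ∈ Ioc c d) :
    gapRight K b t = d :=
  IsLeast.csInf_eq
    ⟨⟨h.2.1, ht.2, hdb⟩, fun _ hk => h.right_le_of_mem hk.1 (ht.1.trans_le hk.2.1)⟩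

lemma isGap_gapLeft_gapRight (hK : IsCompact K) (ha : a ∈ K) (hb : b ∈ K) (ht : t ∈ Icc a b)
    (htK : t ∉ K) :
    IsGap K (gapLeft K a t) (gapRight K b t) ∧ t ∈ Ioo (gapLeft K a t) (gapRight K b t) := by
  have hl := isGreatest_gapLeft hK ha ht.1
  have hr := isLeast_gapRight hK hb ht.2
  have hlt : gapLeft K a t < t := hl.1.2.2.lt_of_ne fun h => htK (h ▸ hl.1.1)
  have hrt : t < gapRight K b t := hr.1.2.1.lt_of_ne' fun h => htK (h ▸ hr.1.1)
  refine ⟨⟨hl.1.1, hr.1.1, hlt.trans hrt, eq_empty_iff_forall_notMem.2 ?_⟩, hlt, hrt⟩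
  rintro k ⟨⟨hlk, hkr⟩, hk⟩
  rcases le_total k t with hkt | htk
  · exact (hl.2 ⟨hk, hl.1.2.1.trans hlk.le, hkt⟩).not_gt hlk
  · exact (hr.2 ⟨hk, htk, hkr.le.trans hr.1.2.2⟩).not_gt hkr

end GapEndpoints

lemma abs_lineMap_sub_lt {u w v r ε : ℝ} (hr : r ∈ Icc 0 1) (hu : |u - v| < ε / 2)
    (hw : r * |w - v| ≤ ε / 2) : |lineMap u w r - v| < ε := by
  have hsplit : lineMap u w r - v = (1 - r) * (u - v) + r * (w - v) := by
    rw [lineMap_apply_ring]; ring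
  calc |lineMap u w r - v| ≤ (1 - r) * |u - v| + r * |w - v| := by
        rw [hsplit]
        refine (abs_add_le _ _).trans_eq ?_
        rw [abs_mul, abs_mul, abs_of_nonneg (sub_nonneg.2 hr.2), abs_of_nonneg hr.1]
    _ < ε := by nlinarith [mul_nonneg hr.1 (abs_nonneg (u - v))]

/-- Interpolating from an endpoint `p` close to `t` stays close to `v`: either the other endpoint
`q` is close to `t` as well, or it is far and its weight `|y - p| / |q - p|` is small. -/
lemma abs_lineMap_div_sub_lt {p q y t u w v ε δ δ₁ M : ℝ} (hu : |u - v| < ε / 2)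
    (hw : |w - v| ≤ M) (hwq : |q - t| < δ₁ → |w - v| < ε / 2) (hpt : |p - t| < δ)
    (hyp : |y - p| < δ) (hyq : |y - p| ≤ |q - p|) (hδ : 2 * δ ≤ δ₁) (hδM : 4 * M * δ ≤ δ₁ * ε) :
    |lineMap u w (|y - p| / |q - p|) - v| < ε := by
  have hr : |y - p| / |q - p| ∈ Icc 0 1 := ⟨by positivity, div_le_one_of_le₀ hyq (abs_nonneg _)⟩
  refine abs_lineMap_sub_lt hr hu ?_
  by_cases hq : |q - t| < δ₁
  · nlinarith [hwq hq, hr.2, abs_nonneg (w - v)]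
  · have hδpos : 0 < δ := (abs_nonneg _).trans_lt hpt
    have hε : 0 < ε := by linarith [abs_nonneg (u - v)]
    have hqp : δ₁ / 2 ≤ |q - p| := by
      linarith [abs_sub_le q p t, abs_sub_comm p t, not_lt.1 hq]
    rw [div_mul_eq_mul_div, div_le_iff₀ (by linarith)]
    calc |y - p| * |w - v| ≤ δ * M := mul_le_mul hyp.le hw (abs_nonneg _) hδpos.le
      _ ≤ ε / 2 * (δ₁ / 2) := by linarith
      _ ≤ ε / 2 * |q - p| := by gcongr

def PreservesGapsOn (K : Set ℝ) (f : ℝ → ℝ) (s : Set ℝ) : Prop :=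
  ∀ c ∈ s, ∀ d ∈ s, IsGap K c d → IsGapPair K (f c) (f d)

section Interpolation

variable (K : Set ℝ) (f : ℝ → ℝ)

/-- On `K` both gap endpoints of `t` equal `t` and the interpolation parameter is `0 / 0 = 0`,
so `gapInterp K f a b` extends `f` from `K ∩ [a, b]`. -/
noncomputable def gapInterp (a b t : ℝ) : ℝ :=
  lineMap (f (gapLeft K a t)) (f (gapRight K b t))
    ((t - gapLeft K a t) / (gapRight K b t - gapLeft K a t))

variable {K f} {a b c d t : ℝ}

lemma gapInterp_of_mem (htK : t ∈ K) (ht : t ∈ Icc a b) : gapInterp K f a b t = f t := by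
  simp [gapInterp, gapLeft_eq_self htK ht.1, gapRight_eq_self htK ht.2]

lemma gapInterp_eq_of_isGap (h : IsGap K c d) (hac : a ≤ c) (hdb : d ≤ b) (ht : t ∈ Ioo c d) :
    gapInterp K f a b t = lineMap (f c) (f d) ((t - c) / (d - c)) := by
  rw [gapInterp, gapLeft_eq_of_isGap h hac (Ioo_subset_Ico_self ht),
    gapRight_eq_of_isGap h hdb (Ioo_subset_Ioc_self ht)]

lemma continuousAt_gapInterp_of_isGap (h : IsGap K c d) (hac : a ≤ c) (hdb : d ≤ b)
    (ht : t ∈ Ioo c d) : ContinuousAt (gapInterp K f a b) t := by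
  refine (Continuous.continuousAt (by fun_prop) :
    ContinuousAt (fun s => lineMap (f c) (f d) ((s - c) / (d - c))) t).congr ?_
  filter_upwards [Ioo_mem_nhds ht.1 ht.2] with s hs
  exact (gapInterp_eq_of_isGap h hac hdb hs).symm

lemma abs_gapInterp_sub_lt (hK : IsCompact K) (ha : a ∈ K) (hb : b ∈ K) (ht : t ∈ Icc a b)
    (htK : t ∈ K) {y ε δ δ₁ M : ℝ} (hnear : ∀ k ∈ K, |k - t| < δ₁ → |f k - f t| < ε / 2)
    (hbound : ∀ k ∈ K, |f k - f t| ≤ M) (hδ : 2 * δ ≤ δ₁) (hδM : 4 * M * δ ≤ δ₁ * ε)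
    (hy : y ∈ Icc a b) (hyt : |y - t| < δ) : |gapInterp K f a b y - f t| < ε := by
  have hl := isGreatest_gapLeft hK ha hy.1
  have hr := isLeast_gapRight hK hb hy.2
  set c := gapLeft K a y
  set d := gapRight K b y
  have hyt' := abs_lt.1 hyt
  have hcy : c ≤ y := hl.1.2.2
  have hyd : y ≤ d := hr.1.2.1
  rcases (hcy.trans hyd).eq_or_lt with hcd | hcd
  · have hyK : y ∈ K := le_antisymm (hcd ▸ hyd) hcy ▸ hl.1.1
    rw [gapInterp_of_mem hyK hy]
    linarith [hnear y hyK (by linarith [abs_nonneg (y - t)]), abs_nonneg (f y - f t)]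
  show |lineMap (f c) (f d) ((y - c) / (d - c)) - f t| < ε
  rcases le_total t y with hty | hyt
  · have htc : t ≤ c := hl.2 ⟨htK, ht.1, hty⟩
    have := abs_lineMap_div_sub_lt (p := c) (q := d) (y := y)
      (hnear c hl.1.1 (abs_lt.2 ⟨by linarith, by linarith⟩)) (hbound d hr.1.1) (hnear d hr.1.1)
      (abs_lt.2 ⟨by linarith, by linarith⟩) (abs_lt.2 ⟨by linarith, by linarith⟩)
      (abs_le_abs (by linarith) (by linarith)) hδ hδM
    rwa [abs_of_nonneg (sub_nonneg.2 hcy), abs_of_pos (sub_pos.2 hcd)] at this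
  · have hdt : d ≤ t := hr.2 ⟨htK, hyt, ht.2⟩
    have := abs_lineMap_div_sub_lt (p := d) (q := c) (y := y)
      (hnear d hr.1.1 (abs_lt.2 ⟨by linarith, by linarith⟩)) (hbound c hl.1.1) (hnear c hl.1.1)
      (abs_lt.2 ⟨by linarith, by linarith⟩) (abs_lt.2 ⟨by linarith, by linarith⟩)
      (by rw [abs_sub_comm y d, abs_sub_comm c d]; exact abs_le_abs (by linarith) (by linarith))
      hδ hδM
    have hdc : d - c ≠ 0 := (sub_pos.2 hcd).ne'
    rwa [abs_of_nonpos (sub_nonpos.2 hyd), abs_of_neg (sub_neg.2 hcd), neg_sub, neg_sub,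
      ← lineMap_apply_one_sub, show 1 - (d - y) / (d - c) = (y - c) / (d - c) by
        field_simp; ring] at this

lemma continuousWithinAt_gapInterp_of_mem (hK : IsCompact K) (hf : ContinuousOn f K)
    (ha : a ∈ K) (hb : b ∈ K) (ht : t ∈ Icc a b) (htK : t ∈ K) :
    ContinuousWithinAt (gapInterp K f a b) (Icc a b) t := by
  rw [Metric.continuousWithinAt_iff]
  intro ε hε
  obtain ⟨δ₁, hδ₁, hnear⟩ := Metric.continuousWithinAt_iff.1 (hf t htK) (ε / 2) (half_pos hε)
  obtain ⟨M, hM, hbound⟩ :=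
    (hK.image_of_continuousOn (hf.sub continuousOn_const)).isBounded.exists_pos_norm_le
  obtain ⟨δ, hδpos, hδ, hδM⟩ : ∃ δ > 0, 2 * δ ≤ δ₁ ∧ 4 * M * δ ≤ δ₁ * ε := by
    have h := min_le_right (δ₁ / 2) (δ₁ * ε / (4 * M))
    rw [le_div_iff₀ (by positivity)] at h
    exact ⟨min (δ₁ / 2) (δ₁ * ε / (4 * M)), by positivity,
      by linarith [min_le_left (δ₁ / 2) (δ₁ * ε / (4 * M))], by linarith⟩
  refine ⟨δ, hδpos, fun y hy hyt => ?_⟩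
  rw [Real.dist_eq] at hyt ⊢
  rw [gapInterp_of_mem htK ht]
  exact abs_gapInterp_sub_lt hK ha hb ht htK hnear
    (fun k hk => hbound _ (mem_image_of_mem _ hk)) hδ hδM hy hyt

lemma continuousOn_gapInterp (hK : IsCompact K) (hf : ContinuousOn f K) (ha : a ∈ K)
    (hb : b ∈ K) :
    ContinuousOn (gapInterp K f a b) (Icc a b) := by
  intro t ht
  by_cases htK : t ∈ K
  · exact continuousWithinAt_gapInterp_of_mem hK hf ha hb ht htK
  · obtain ⟨hgap, hmem⟩ := isGap_gapLeft_gapRight hK ha hb ht htK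
    exact (continuousAt_gapInterp_of_isGap hgap (gapLeft_mem hK ha ht).2.1
      (gapRight_mem hK hb ht).2.2 hmem).continuousWithinAt

section PreservesGaps

variable (hK : IsCompact K) (ha : a ∈ K) (hb : b ∈ K)
  (hgap : PreservesGapsOn K f (Icc a b)) (hmaps : MapsTo f (K ∩ Icc a b) K)
  (hinj : InjOn f (K ∩ Icc a b))
include hK ha hb hgap

lemma gapInterp_mem_uIoo (ht : t ∈ Icc a b) (htK : t ∉ K) :
    IsGapPair K (f (gapLeft K a t)) (f (gapRight K b t)) ∧
      gapInterp K f a b t ∈ uIoo (f (gapLeft K a t)) (f (gapRight K b t)) := by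
  obtain ⟨hg, hlt, hrt⟩ := isGap_gapLeft_gapRight hK ha hb ht htK
  have himg := hgap _ (gapLeft_mem hK ha ht).2 _ (gapRight_mem hK hb ht).2 hg
  have hlen : 0 < gapRight K b t - gapLeft K a t := sub_pos.2 (hlt.trans hrt)
  refine ⟨himg, ?_⟩
  rw [← Ioo_min_max, ← openSegment_eq_Ioo' himg.ne]
  exact lineMap_mem_openSegment ℝ _ _
    ⟨div_pos (sub_pos.2 hlt) hlen, (div_lt_one hlen).2 (by linarith)⟩

include hmaps in
lemma gapInterp_mem_iff (ht : t ∈ Icc a b) : gapInterp K f a b t ∈ K ↔ t ∈ K := by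
  refine ⟨fun h => by_contra fun htK => ?_, fun htK => ?_⟩
  · obtain ⟨himg, hmem⟩ := gapInterp_mem_uIoo hK ha hb hgap ht htK
    exact himg.notMem_of_mem_uIoo hmem h
  · exact gapInterp_of_mem htK ht ▸ hmaps ⟨htK, ht⟩

include hinj in
lemma eq_of_gapInterp_eq_of_notMem {s : ℝ} (hs : s ∈ Icc a b) (ht : t ∈ Icc a b) (hsK : s ∉ K)
    (htK : t ∉ K) (hst : gapInterp K f a b s = gapInterp K f a b t) : s = t := by
  obtain ⟨hgs, hs'⟩ := gapInterp_mem_uIoo hK ha hb hgap hs hsK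
  obtain ⟨hgt, ht'⟩ := gapInterp_mem_uIoo hK ha hb hgap ht htK
  have hcs := (isGap_gapLeft_gapRight hK ha hb hs hsK).1.2.2.1
  have hct := (isGap_gapLeft_gapRight hK ha hb ht htK).1.2.2.1
  rw [hst] at hs'
  rcases hgs.eq_or_eq_swap_of_mem_uIoo hgt hs' ht' with ⟨hl, hr⟩ | ⟨hl, hr⟩
  · have hl := hinj (gapLeft_mem hK ha hs) (gapLeft_mem hK ha ht) hl
    have hr := hinj (gapRight_mem hK hb hs) (gapRight_mem hK hb ht) hr
    rw [gapInterp, gapInterp, hl, hr] at hst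
    have := lineMap_injective ℝ hgt.ne hst
    rwa [div_left_inj' (sub_pos.2 hct).ne', sub_left_inj] at this
  · have hl := hinj (gapLeft_mem hK ha hs) (gapRight_mem hK hb ht) hl
    have hr := hinj (gapRight_mem hK hb hs) (gapLeft_mem hK ha ht) hr
    linarith

include hmaps hinj in
lemma injOn_gapInterp : InjOn (gapInterp K f a b) (Icc a b) := by
  intro s hs t ht hst
  have hmem := (gapInterp_mem_iff hK ha hb hgap hmaps hs).symm.trans
    (hst ▸ gapInterp_mem_iff hK ha hb hgap hmaps ht)
  by_cases htK : t ∈ K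
  · have hsK := hmem.2 htK
    rw [gapInterp_of_mem hsK hs, gapInterp_of_mem htK ht] at hst
    exact hinj ⟨hsK, hs⟩ ⟨htK, ht⟩ hst
  · exact eq_of_gapInterp_eq_of_notMem hK ha hb hgap hinj hs ht (mt hmem.1 htK) htK hst

include hmaps hinj in
theorem strictMonoOn_or_strictAntiOn_gapInterp (hf : ContinuousOn f K) (hab : a ≤ b) :
    StrictMonoOn (gapInterp K f a b) (Icc a b) ∨ StrictAntiOn (gapInterp K f a b) (Icc a b) :=
  (continuousOn_gapInterp hK hf ha hb).strictMonoOn_of_injOn_Icc' hab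
    (injOn_gapInterp hK ha hb hgap hmaps hinj)

include hmaps hinj in
theorem image_gapInterp_Icc_inter (hf : ContinuousOn f K) (hab : a ≤ b) :
    gapInterp K f a b '' (Icc a b ∩ K) = uIcc (f a) (f b) ∩ K := by
  have hpre : Icc a b ∩ K = Icc a b ∩ gapInterp K f a b ⁻¹' K := by
    ext t
    exact and_congr_right fun ht => (gapInterp_mem_iff hK ha hb hgap hmaps ht).symm
  have hcont := continuousOn_gapInterp hK hf ha hb
  rw [hpre, image_inter_preimage, ← gapInterp_of_mem (f := f) ha (left_mem_Icc.2 hab),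
    ← gapInterp_of_mem (f := f) hb (right_mem_Icc.2 hab)]
  rw [← uIcc_of_le hab] at hcont ⊢
  rcases strictMonoOn_or_strictAntiOn_gapInterp hK ha hb hgap hmaps hinj hf hab with h | h
  · rw [hcont.image_uIcc_of_monotoneOn (uIcc_of_le hab ▸ h.monotoneOn)]
  · rw [hcont.image_uIcc_of_antitoneOn (uIcc_of_le hab ▸ h.antitoneOn)]

end PreservesGaps

end Interpolation

section HomeomorphExtension

variable {K : Set ℝ} (g : K ≃ₜ K)

open Classical in
noncomputable def extendReal (x : ℝ) : ℝ := if h : x ∈ K then g ⟨x, h⟩ else 0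

lemma extendReal_coe (x : K) : extendReal g x = g x := dif_pos x.2

lemma continuousOn_extendReal : ContinuousOn (extendReal g) K := by
  rw [continuousOn_iff_continuous_domRestrict]
  convert continuous_subtype_val.comp g.continuous using 1
  exact funext (extendReal_coe g)

lemma mapsTo_extendReal : MapsTo (extendReal g) K K :=
  fun x hx => extendReal_coe g ⟨x, hx⟩ ▸ (g _).2

lemma injOn_extendReal : InjOn (extendReal g) K := fun x hx y hy h => by
  rw [extendReal_coe g ⟨x, hx⟩, extendReal_coe g ⟨y, hy⟩] at h
  exact congrArg Subtype.val (g.injective (Subtype.ext h))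

lemma preservesGapsOn_extendReal {a b : ℝ}
    (hreg : ∀ c d : K, (c : ℝ) ∈ Icc a b → (d : ℝ) ∈ Icc a b → ¬ IsBreakPair K g c d) :
    PreservesGapsOn K (extendReal g) (Icc a b) := by
  intro c hc d hd hcd
  have := hreg ⟨c, hcd.1⟩ ⟨d, hcd.2.1⟩ hc hd
  rw [IsBreakPair, not_and, not_not] at this
  simpa only [IsGapPair, ← extendReal_coe] using this (.inl hcd)

end HomeomorphExtension

/-- If `[a, b]` contains no break pair of `g`, then `g` is monotone on `[a,b] ∩ K`
and maps it onto `[g a, g b] ∩ K` (with the appropriate orientation). -/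
theorem stmt3 (K : Set ℝ) (hK : IsCompact K) (g : K ≃ₜ K) (a b : K)
    (hab : (a : ℝ) ≤ b)
    (hreg : ∀ c d : K, (c : ℝ) ∈ Set.Icc (a : ℝ) b → (d : ℝ) ∈ Set.Icc (a : ℝ) b →
      ¬ IsBreakPair K g c d) :
    (MonotoneOn (fun x : K => (g x : ℝ)) {x : K | (x : ℝ) ∈ Set.Icc (a : ℝ) b} ∨
      AntitoneOn (fun x : K => (g x : ℝ)) {x : K | (x : ℝ) ∈ Set.Icc (a : ℝ) b}) ∧
    Set.InjOn (fun x : K => (g x : ℝ)) {x : K | (x : ℝ) ∈ Set.Icc (a : ℝ) b} ∧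
    (fun x : K => (g x : ℝ)) '' {x : K | (x : ℝ) ∈ Set.Icc (a : ℝ) b} =
      Set.Icc (min (g a : ℝ) (g b : ℝ)) (max (g a : ℝ) (g b : ℝ)) ∩ K := by
  have hgap := preservesGapsOn_extendReal g hreg
  have hmaps : MapsTo (extendReal g) (K ∩ Icc (a : ℝ) b) K :=
    (mapsTo_extendReal g).mono_left inter_subset_left
  have hinj : InjOn (extendReal g) (K ∩ Icc (a : ℝ) b) :=
    (injOn_extendReal g).mono inter_subset_left
  have hcont := continuousOn_extendReal g
  have hFg : EqOn (gapInterp K (extendReal g) a b ∘ Subtype.val) (fun x : K => (g x : ℝ))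
      {x : K | (x : ℝ) ∈ Icc (a : ℝ) b} := fun x hx =>
    (gapInterp_of_mem x.2 hx).trans (extendReal_coe g x)
  refine ⟨?_, fun x _ y _ h => g.injective (Subtype.ext h), ?_⟩
  · rcases strictMonoOn_or_strictAntiOn_gapInterp hK a.2 b.2 hgap hmaps hinj hcont hab with h | h
    · exact .inl ((h.monotoneOn.comp ((Subtype.mono_coe _).monotoneOn _) fun _ hx => hx).congr
        hFg)
    · exact .inr ((h.antitoneOn.comp_MonotoneOn ((Subtype.mono_coe _).monotoneOn _)
        fun _ hx => hx).congr hFg)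
  · rw [← hFg.image_eq, image_comp, ← preimage_ofPred_eq, Subtype.image_preimage_coe,
      ofPred_mem_eq, inter_comm, image_gapInterp_Icc_inter hK a.2 b.2 hgap hmaps hinj hcont hab,
      extendReal_coe, extendReal_coe]
    rfl
end

section
/- Every locally monotonic homeomorphism of a compact subset K of ℝ has only finitely many break points. -/
/-- `f` is locally monotonic: every point of `K` has an open interval around it
on which `f` is monotone. -/
def LocallyMonotone (K : Set ℝ) (f : K → ℝ) : Prop :=
  ∀ x : K, ∃ I : Set ℝ, IsOpen I ∧ (x : ℝ) ∈ I ∧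
    (MonotoneOn f {y : K | (y : ℝ) ∈ I} ∨ AntitoneOn f {y : K | (y : ℝ) ∈ I})

/-- Separated subsets of a compact set are finite. -/
lemma sep_finite {K : Set ℝ} (hK : IsCompact K) {s : Set ℝ} (hs : s ⊆ K) {δ : ℝ}
    (hδ : 0 < δ) (hsep : ∀ a ∈ s, ∀ b ∈ s, a ≠ b → δ ≤ |a - b|) : s.Finite := by
  obtain ⟨t, htfin, hcov⟩ := (Metric.totallyBounded_iff.1 hK.totallyBounded) (δ/2) (by linarith)
  have hsub : s ⊆ ⋃ y ∈ t, (s ∩ Metric.ball y (δ/2)) := by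
    intro z hz
    obtain ⟨y, hy, hzy⟩ := Set.mem_iUnion₂.1 (hcov (hs hz))
    exact Set.mem_iUnion₂.2 ⟨y, hy, hz, hzy⟩
  refine Set.Finite.subset (htfin.biUnion fun y _ => ?_) hsub
  refine Set.Subsingleton.finite ?_
  intro a ⟨ha, ha'⟩ b ⟨hb, hb'⟩
  by_contra hne
  have := hsep a ha b hb hne
  rw [Metric.mem_ball, Real.dist_eq] at ha' hb'
  have : |a - b| ≤ |a - y| + |y - b| := abs_sub_le a y b
  have h1 : |y - b| = |b - y| := abs_sub_comm y b
  have := hsep a ha b hb hne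
  linarith [abs_sub_le a y b, (abs_sub_comm y b).le, hsep a ha b hb hne,
    (abs_sub_comm y b).ge]

/-- A sequence-free local lemma: near any point of `K`, no break pair. -/
lemma local_good (K : Set ℝ) (g : K ≃ₜ K)
    (hmono : LocallyMonotone K (fun x => (g x : ℝ))) (x : K) :
    ∃ ε > 0, ∀ a b : K, dist (a : ℝ) (x : ℝ) < ε → dist (b : ℝ) (x : ℝ) < ε →
      ¬ IsBreakPair K g a b := by
  obtain ⟨I, hIopen, hxI, hmon⟩ := hmono x
  obtain ⟨ε₁, hε₁, hball⟩ := Metric.isOpen_iff.1 hIopen _ hxI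
  obtain ⟨δ, hδ, hδ'⟩ := Metric.continuousAt_iff.1 (g.symm.continuous.continuousAt (x := g x)) ε₁ hε₁
  obtain ⟨ε₂, hε₂, h2⟩ := Metric.continuousAt_iff.1 (g.continuous.continuousAt (x := x)) δ hδ
  refine ⟨min ε₁ ε₂, lt_min hε₁ hε₂, ?_⟩
  -- helper: if a,b near x and IsGap a b then the images form a gap
  have helper : ∀ a b : K, dist (a : ℝ) (x : ℝ) < min ε₁ ε₂ → dist (b : ℝ) (x : ℝ) < min ε₁ ε₂ →
      IsGap K a b → (IsGap K (g a) (g b) ∨ IsGap K (g b) (g a)) := by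
    intro a b hda hdb hgap
    obtain ⟨haK, hbK, hab, hempty⟩ := hgap
    have haI : (a : ℝ) ∈ I := hball (lt_of_lt_of_le hda (min_le_left _ _))
    have hbI : (b : ℝ) ∈ I := hball (lt_of_lt_of_le hdb (min_le_left _ _))
    have hga : dist ((g a : K) : ℝ) ((g x : K) : ℝ) < δ := by
      have := h2 (show dist a x < ε₂ from lt_of_lt_of_le hda (min_le_right _ _))
      rwa [Subtype.dist_eq] at this
    have hgb : dist ((g b : K) : ℝ) ((g x : K) : ℝ) < δ := by
      have := h2 (show dist b x < ε₂ from lt_of_lt_of_le hdb (min_le_right _ _))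
      rwa [Subtype.dist_eq] at this
    -- key: any point of K strictly between g a, g b (in either order) gives contradiction
    have hW : ∀ (z : ℝ) (hz : z ∈ K),
        ((a : ℝ) < (g.symm ⟨z, hz⟩ : ℝ) ∧ ((g.symm ⟨z, hz⟩ : K) : ℝ) < b) → False := by
      intro z hz ⟨h1, h2'⟩
      have : (g.symm ⟨z, hz⟩ : ℝ) ∈ Set.Ioo (a : ℝ) (b : ℝ) ∩ K :=
        ⟨⟨h1, h2'⟩, (g.symm ⟨z, hz⟩).2⟩
      rw [hempty] at this
      exact this
    have hne : (g a : K) ≠ g b := fun h => absurd (g.injective h) (by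
      intro h'; rw [h'] at hab; exact lt_irrefl _ hab)
    have hneR : ((g a : K) : ℝ) ≠ ((g b : K) : ℝ) := fun h => hne (Subtype.ext h)
    rcases hmon with mono | anti
    · -- monotone: g a < g b, and (g a, g b) is a gap
      have hle : ((g a : K) : ℝ) ≤ ((g b : K) : ℝ) := mono haI hbI hab.le
      have hlt : ((g a : K) : ℝ) < ((g b : K) : ℝ) := lt_of_le_of_ne hle hneR
      left
      refine ⟨(g a).2, (g b).2, hlt, Set.eq_empty_iff_forall_notMem.2 ?_⟩
      rintro z ⟨⟨hz1, hz2⟩, hzK⟩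
      have hdz : dist z ((g x : K) : ℝ) < δ := by
        rw [Real.dist_eq, abs_lt]
        rw [Real.dist_eq, abs_lt] at hga hgb
        constructor <;> linarith [hga.1, hga.2, hgb.1, hgb.2]
      set w : K := g.symm ⟨z, hzK⟩ with hw
      have hwx : dist ((w : K) : ℝ) ((x : K) : ℝ) < ε₁ := by
        have := hδ' (show dist (⟨z, hzK⟩ : K) (g x) < δ by rwa [Subtype.dist_eq])
        rwa [g.symm_apply_apply, Subtype.dist_eq] at this
      have hwI : (w : ℝ) ∈ I := hball hwx
      have hgw : ((g w : K) : ℝ) = z := by rw [hw, g.apply_symm_apply]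
      have haw : (a : ℝ) < w := by
        by_contra h
        push_neg at h
        have : ((g w : K) : ℝ) ≤ ((g a : K) : ℝ) := mono hwI haI h
        rw [hgw] at this; linarith
      have hwb : (w : ℝ) < b := by
        by_contra h
        push_neg at h
        have : ((g b : K) : ℝ) ≤ ((g w : K) : ℝ) := mono hbI hwI h
        rw [hgw] at this; linarith
      exact hW z hzK ⟨haw, hwb⟩
    · -- antitone: g b < g a, and (g b, g a) is a gap
      have hle : ((g b : K) : ℝ) ≤ ((g a : K) : ℝ) := anti haI hbI hab.le
      have hlt : ((g b : K) : ℝ) < ((g a : K) : ℝ) := lt_of_le_of_ne hle (Ne.symm hneR)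
      right
      refine ⟨(g b).2, (g a).2, hlt, Set.eq_empty_iff_forall_notMem.2 ?_⟩
      rintro z ⟨⟨hz1, hz2⟩, hzK⟩
      have hdz : dist z ((g x : K) : ℝ) < δ := by
        rw [Real.dist_eq, abs_lt]
        rw [Real.dist_eq, abs_lt] at hga hgb
        constructor <;> linarith [hga.1, hga.2, hgb.1, hgb.2]
      set w : K := g.symm ⟨z, hzK⟩ with hw
      have hwx : dist ((w : K) : ℝ) ((x : K) : ℝ) < ε₁ := by
        have := hδ' (show dist (⟨z, hzK⟩ : K) (g x) < δ by rwa [Subtype.dist_eq])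
        rwa [g.symm_apply_apply, Subtype.dist_eq] at this
      have hwI : (w : ℝ) ∈ I := hball hwx
      have hgw : ((g w : K) : ℝ) = z := by rw [hw, g.apply_symm_apply]
      have haw : (a : ℝ) < w := by
        by_contra h
        push_neg at h
        have : ((g a : K) : ℝ) ≤ ((g w : K) : ℝ) := anti hwI haI h
        rw [hgw] at this; linarith
      have hwb : (w : ℝ) < b := by
        by_contra h
        push_neg at h
        have : ((g w : K) : ℝ) ≤ ((g b : K) : ℝ) := anti hbI hwI h
        rw [hgw] at this; linarith
      exact hW z hzK ⟨haw, hwb⟩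
  rintro a b hda hdb ⟨hgap, hnot⟩
  rcases hgap with h | h
  · exact hnot (helper a b hda hdb h)
  · exact hnot (Or.symm (helper b a hdb hda h))

/-- A locally monotonic homeomorphism of a compact subset of `ℝ` has finitely many
break points. -/
theorem stmt4 (K : Set ℝ) (hK : IsCompact K) (g : K ≃ₜ K)
    (hmono : LocallyMonotone K (fun x => (g x : ℝ))) :
    {x : K | ∃ y : K, IsBreakPair K g x y}.Finite := by
  choose ε hεpos hε using local_good K g hmono
  -- Lebesgue number for the cover by balls
  have hcov : K ⊆ ⋃ i : K, Metric.ball (i : ℝ) (ε i) := by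
    intro y hy
    exact Set.mem_iUnion.2 ⟨⟨y, hy⟩, Metric.mem_ball_self (hεpos ⟨y, hy⟩)⟩
  obtain ⟨δ, hδ, hleb⟩ := lebesgue_number_lemma_of_metric hK (fun i => Metric.isOpen_ball) hcov
  -- every break pair is δ-separated
  have hsep : ∀ a b : K, IsBreakPair K g a b → δ ≤ |(a : ℝ) - (b : ℝ)| := by
    intro a b hpair
    by_contra h
    push_neg at h
    obtain ⟨i, hi⟩ := hleb (a : ℝ) a.2
    have hai : dist (a : ℝ) ((i : K) : ℝ) < ε i := hi (Metric.mem_ball_self hδ)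
    have hbi : dist (b : ℝ) ((i : K) : ℝ) < ε i := hi (by rwa [Metric.mem_ball, Real.dist_eq, abs_sub_comm])
    exact hε i a b hai hbi hpair
  -- endpoints of long gaps
  set A : Set ℝ := {p : ℝ | ∃ q : ℝ, IsGap K p q ∧ δ ≤ q - p} with hA
  set B : Set ℝ := {q : ℝ | ∃ p : ℝ, IsGap K p q ∧ δ ≤ q - p} with hB
  have hAK : A ⊆ K := fun p ⟨q, hg, _⟩ => hg.1
  have hBK : B ⊆ K := fun q ⟨p, hg, _⟩ => hg.2.1
  have hAfin : A.Finite := by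
    refine sep_finite hK hAK hδ ?_
    rintro p ⟨q, ⟨hpK, hqK, hpq, hem⟩, hlen⟩ p' ⟨q', ⟨hpK', hqK', hpq', hem'⟩, hlen'⟩ hne
    by_contra h
    push_neg at h
    rw [abs_lt] at h
    rcases lt_or_gt_of_ne hne with hlt | hlt
    · have : p' ∈ Set.Ioo p q ∩ K := ⟨⟨hlt, by linarith⟩, hpK'⟩
      rw [hem] at this; exact this
    · have : p ∈ Set.Ioo p' q' ∩ K := ⟨⟨hlt, by linarith⟩, hpK⟩
      rw [hem'] at this; exact this
  have hBfin : B.Finite := by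
    refine sep_finite hK hBK hδ ?_
    rintro q ⟨p, ⟨hpK, hqK, hpq, hem⟩, hlen⟩ q' ⟨p', ⟨hpK', hqK', hpq', hem'⟩, hlen'⟩ hne
    by_contra h
    push_neg at h
    rw [abs_lt] at h
    rcases lt_or_gt_of_ne hne with hlt | hlt
    · have : q ∈ Set.Ioo p' q' ∩ K := ⟨⟨by linarith, hlt⟩, hqK⟩
      rw [hem'] at this; exact this
    · have : q' ∈ Set.Ioo p q ∩ K := ⟨⟨by linarith, hlt⟩, hqK'⟩
      rw [hem] at this; exact this
  -- break points map into A ∪ B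
  have himg : Subtype.val '' {x : K | ∃ y : K, IsBreakPair K g x y} ⊆ A ∪ B := by
    rintro p ⟨x, ⟨y, hpair⟩, rfl⟩
    have hd := hsep x y hpair
    rcases hpair.1 with hg' | hg'
    · left
      refine ⟨(y : ℝ), hg', ?_⟩
      have := hg'.2.2.1
      rw [abs_of_neg (by linarith : (x:ℝ) - (y:ℝ) < 0)] at hd
      linarith
    · right
      refine ⟨(y : ℝ), hg', ?_⟩
      have := hg'.2.2.1
      rw [abs_of_pos (by linarith : (0:ℝ) < (x:ℝ) - (y:ℝ))] at hd
      linarith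
  have := (hAfin.union hBfin).subset himg
  exact Set.Finite.of_finite_image this Subtype.val_injective.injOn
end

section
/- Let S be a finite set of locally monotonic homeomorphisms of a compact set K ⊆ ℝ. Then there exists r₀ > 0 such that every element of S is monotone on I ∩ K for every interval I of length less than r₀ containing no break pair of that element; equivalently, every element of S is regular on every interval of length less than r₀. -/
/-!
Near each point `x` of `K`, an element `g` is monotone (or antitone) on `I ∩ K` for an open
interval `I ∋ x`. Since `g⁻¹` is continuous at `g x`, the points of `K` close to `g x` all come
from `I`; so for `c, d` close enough to `x`, every point of `K` between `g c` and `g d` is the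
image of a point of `I`, and monotonicity on `I ∩ K` forces the image of a gap `(c, d)` to be a
gap again. This gives a regularity radius around each point; a Lebesgue number of the resulting
cover of the compact set `K` works for one `g`, and the minimum over the finite set `S` for all.
-/

open Set Metric Filter Topology

section Order

variable {α β : Type*} [LinearOrder α] [Preorder β] {f : α → β} {s : Set α} {a b x : α}

theorem MonotoneOn.apply_notMem_Ioo (hf : MonotoneOn f s) (ha : a ∈ s) (hb : b ∈ s)
    (hx : x ∈ s) (hxab : x ∉ Ioo a b) : f x ∉ Ioo (f a) (f b) := by
  rintro ⟨hax, hxb⟩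
  rcases le_or_gt x a with hxa | hax'
  · exact (hf hx ha hxa).not_gt hax
  · exact (hf hb hx (not_lt.1 fun hxb' => hxab ⟨hax', hxb'⟩)).not_gt hxb

theorem AntitoneOn.apply_notMem_Ioo (hf : AntitoneOn f s) (ha : a ∈ s) (hb : b ∈ s)
    (hx : x ∈ s) (hxab : x ∉ Ioo a b) : f x ∉ Ioo (f b) (f a) := by
  rintro ⟨hbx, hxa⟩
  rcases le_or_gt x a with hxa' | hax
  · exact (hf hx ha hxa').not_gt hxa
  · exact (hf hb hx (not_lt.1 fun hxb => hxab ⟨hax, hxb⟩)).not_gt hbx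

end Order

section Gap

variable {K : Set ℝ} {f : K → K} {P : Set K} {c d : K}

theorem IsGap.notMem_Ioo (h : IsGap K c d) (w : K) : w ∉ Ioo c d :=
  fun hw => h.2.2.2.subset ⟨hw, w.2⟩

theorem IsGap.image_of_monotoneOn (h : IsGap K c d)
    (hf : MonotoneOn (fun y => (f y : ℝ)) P) (hinj : f.Injective) (hc : c ∈ P) (hd : d ∈ P)
    (hP : ∀ z : K, (z : ℝ) ∈ Ioo (f c : ℝ) (f d) → z ∈ f '' P) :
    IsGap K (f c) (f d) := by
  refine ⟨(f c).2, (f d).2, (hf hc hd h.2.2.1.le).lt_of_ne ?_, ?_⟩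
  · exact Subtype.coe_injective.ne (hinj.ne (show c < d from h.2.2.1).ne)
  · refine eq_empty_of_forall_notMem fun t ⟨ht, htK⟩ => ?_
    obtain ⟨w, hwP, hw⟩ := hP ⟨t, htK⟩ ht
    exact hf.apply_notMem_Ioo hc hd hwP (h.notMem_Ioo w) (by rwa [hw])

theorem IsGap.image_of_antitoneOn (h : IsGap K c d)
    (hf : AntitoneOn (fun y => (f y : ℝ)) P) (hinj : f.Injective) (hc : c ∈ P) (hd : d ∈ P)
    (hP : ∀ z : K, (z : ℝ) ∈ Ioo (f d : ℝ) (f c) → z ∈ f '' P) :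
    IsGap K (f d) (f c) := by
  refine ⟨(f d).2, (f c).2, (hf hc hd h.2.2.1.le).lt_of_ne ?_, ?_⟩
  · exact Subtype.coe_injective.ne (hinj.ne (show c < d from h.2.2.1).ne')
  · refine eq_empty_of_forall_notMem fun t ⟨ht, htK⟩ => ?_
    obtain ⟨w, hwP, hw⟩ := hP ⟨t, htK⟩ ht
    exact hf.apply_notMem_Ioo hc hd hwP (h.notMem_Ioo w) (by rwa [hw])

theorem not_isBreakPair_of_monotoneOn_or_antitoneOn {g : K ≃ₜ K}
    (hg : MonotoneOn (fun y => (g y : ℝ)) P ∨ AntitoneOn (fun y => (g y : ℝ)) P)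
    (hc : c ∈ P) (hd : d ∈ P)
    (hP : ∀ z : K, (z : ℝ) ∈ uIoo (g c : ℝ) (g d) → z ∈ g '' P) :
    ¬IsBreakPair K g c d := by
  rintro ⟨hcd | hdc, himage⟩ <;> apply himage <;> rcases hg with hmono | hanti
  · exact .inl <| hcd.image_of_monotoneOn hmono g.injective hc hd fun z hz =>
      hP z (Ioo_subset_uIoo hz)
  · exact .inr <| hcd.image_of_antitoneOn hanti g.injective hc hd fun z hz =>
      hP z (Ioo_subset_uIoo' hz)
  · exact .inr <| hdc.image_of_monotoneOn hmono g.injective hd hc fun z hz =>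
      hP z (Ioo_subset_uIoo' hz)
  · exact .inl <| hdc.image_of_antitoneOn hanti g.injective hd hc fun z hz =>
      hP z (Ioo_subset_uIoo hz)

end Gap

/-- Regularity of `g` on `s` in the sense of the paper (no break pair in `s`), bundled with the
monotonicity of `g` on `s ∩ K`. -/
def RegularOn (K : Set ℝ) (g : K ≃ₜ K) (s : Set ℝ) : Prop :=
  (∀ c d : K, (c : ℝ) ∈ s → (d : ℝ) ∈ s → ¬IsBreakPair K g c d) ∧
    (MonotoneOn (fun x : K => (g x : ℝ)) {x : K | (x : ℝ) ∈ s} ∨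
      AntitoneOn (fun x : K => (g x : ℝ)) {x : K | (x : ℝ) ∈ s})

namespace RegularOn

variable {K : Set ℝ} {g : K ≃ₜ K} {s t : Set ℝ}

theorem mono (h : RegularOn K g t) (hst : s ⊆ t) : RegularOn K g s :=
  ⟨fun c d hc hd => h.1 c d (hst hc) (hst hd),
    h.2.imp (·.mono fun _ hx => hst hx) (·.mono fun _ hx => hst hx)⟩

theorem of_inter_eq_empty (h : s ∩ K = ∅) : RegularOn K g s := by
  have hs : ∀ x : K, (x : ℝ) ∉ s := fun x hx => h.subset ⟨hx, x.2⟩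
  exact ⟨fun c _ hc => absurd hc (hs c), .inl fun x hx => absurd hx (hs x)⟩

end RegularOn

theorem exists_pos_regularOn_ball {K : Set ℝ} {g : K ≃ₜ K}
    (hg : LocallyMonotone K (fun x => (g x : ℝ))) (x : K) :
    ∃ δ > 0, RegularOn K g (ball (x : ℝ) δ) := by
  obtain ⟨I, hIo, hxI, hgI⟩ := hg x
  obtain ⟨ε, hε, hεI⟩ := Metric.isOpen_iff.mp hIo x hxI
  obtain ⟨η, hη, hsymm⟩ :=
    Metric.continuousAt_iff.mp (g.symm.continuous.continuousAt (x := g x)) ε hε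
  obtain ⟨δ, hδ, hcont⟩ := Metric.continuousAt_iff.mp g.continuous.continuousAt η hη
  have hballI : ball (x : ℝ) (min δ ε) ⊆ I :=
    (ball_subset_ball (min_le_right _ _)).trans hεI
  have hnear : ∀ y : K, (y : ℝ) ∈ ball (x : ℝ) (min δ ε) →
      (g y : ℝ) ∈ ball (g x : ℝ) η :=
    fun y hy => hcont (lt_min_iff.1 hy).1
  refine ⟨min δ ε, lt_min hδ hε, fun c d hc hd =>
    not_isBreakPair_of_monotoneOn_or_antitoneOn hgI (hballI hc) (hballI hd) fun z hz => ?_,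
    hgI.imp (·.mono fun _ hy => hballI hy) (·.mono fun _ hy => hballI hy)⟩
  have hzη : dist z (g x) < η :=
    (convex_ball _ _).ordConnected.uIcc_subset (hnear c hc) (hnear d hd)
      (uIoo_subset_uIcc_self hz)
  refine ⟨g.symm z, hεI ?_, g.apply_symm_apply z⟩
  simpa [Subtype.dist_eq] using hsymm hzη

theorem eventually_regularOn_Icc {K : Set ℝ} (hK : IsCompact K) {g : K ≃ₜ K}
    (hg : LocallyMonotone K (fun x => (g x : ℝ))) :
    ∀ᶠ r in 𝓝[>] (0 : ℝ), ∀ a b : ℝ, b - a < r → RegularOn K g (Icc a b) := by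
  choose δ hδ hreg using exists_pos_regularOn_ball hg
  obtain ⟨r, hr, hleb⟩ := lebesgue_number_lemma_of_metric hK
    (fun x : K => isOpen_ball (x := (x : ℝ)) (ε := δ x))
    (fun y hy => mem_iUnion.2 ⟨⟨y, hy⟩, mem_ball_self (hδ _)⟩)
  filter_upwards [Ioo_mem_nhdsGT hr] with r' hr' a b hab
  rcases (Icc a b ∩ K).eq_empty_or_nonempty with hempty | ⟨y, hyab, hyK⟩
  · exact RegularOn.of_inter_eq_empty hempty
  · obtain ⟨x, hx⟩ := hleb y hyK
    exact (hreg x).mono fun t ht =>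
      hx ((Real.dist_le_of_mem_Icc ht hyab).trans_lt (hab.trans hr'.2))

/-- For a finite set `S` of locally monotonic homeomorphisms of a compact `K ⊆ ℝ`,
there is `r₀ > 0` such that every element of `S` is regular (has no break pair, hence
is monotone) on every interval of length less than `r₀`. -/
theorem stmt5 (K : Set ℝ) (hK : IsCompact K) (S : Set (K ≃ₜ K)) (hS : S.Finite)
    (hmono : ∀ g ∈ S, LocallyMonotone K (fun x => (g x : ℝ))) :
    ∃ r₀ > (0 : ℝ), ∀ g ∈ S, ∀ a b : ℝ, b - a < r₀ →
      ((∀ c d : K, (c : ℝ) ∈ Set.Icc a b → (d : ℝ) ∈ Set.Icc a b →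
          ¬ IsBreakPair K g c d) ∧
        (MonotoneOn (fun x : K => (g x : ℝ)) {x : K | (x : ℝ) ∈ Set.Icc a b} ∨
          AntitoneOn (fun x : K => (g x : ℝ)) {x : K | (x : ℝ) ∈ Set.Icc a b})) := by
  have hregular : ∀ᶠ r in 𝓝[>] (0 : ℝ), ∀ g ∈ S, ∀ a b : ℝ, b - a < r →
      RegularOn K g (Icc a b) :=
    hS.eventually_all.2 fun g hg => eventually_regularOn_Icc hK (hmono g hg)
  obtain ⟨r₀, hreg, hr₀⟩ := (hregular.and self_mem_nhdsWithin).exists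
  exact ⟨r₀, hr₀, hreg⟩
end

section
/- Let μ be a harmonic (stationary) measure for a random walk on a group G ≤ Homeo(K) generated by a finite set S with step distribution P of full support. If μ has an atom, then the action of G on K has a finite orbit, and hence an invariant probability measure. -/
/-!
The mass function `x ↦ μ {x}` of a stationary measure is harmonic for the walk:
`μ {x} = ∑ s, p s * μ {s⁻¹ • x}`. Only finitely many atoms have mass above any positive level,
so the largest atomic mass `m` is attained, and the maximum principle shows that the finite set
`A` of atoms of mass `m` satisfies `s⁻¹ • A ⊆ A` for every generator `s`. Being finite, `A` is
then fixed by each `s`, hence by the generated group; it contains the orbit of each of its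
points, and the uniform measure on `A` is invariant.
-/

open MeasureTheory ProbabilityTheory
open scoped ENNReal Pointwise

theorem ENNReal.eq_of_sum_mul_eq_of_le {ι : Type*} {s : Finset ι} {w f : ι → ℝ≥0∞} {m : ℝ≥0∞}
    (hm : m ≠ ∞) (hw : ∑ i ∈ s, w i = 1) (hf : ∀ i ∈ s, f i ≤ m)
    (h : ∑ i ∈ s, w i * f i = m) {i : ι} (hi : i ∈ s) (hwi : w i ≠ 0) : f i = m := by
  have hdefect : ∑ j ∈ s, w j * (m - f j) = 0 := by
    refine (ENNReal.add_right_inj hm).1 ?_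
    calc m + ∑ j ∈ s, w j * (m - f j)
        = ∑ j ∈ s, w j * (f j + (m - f j)) := by
          rw [← h, ← Finset.sum_add_distrib]; simp only [mul_add]
      _ = m + 0 := by
          rw [Finset.sum_congr rfl fun j hj => by rw [add_tsub_cancel_of_le (hf j hj)],
            ← Finset.sum_mul, hw, one_mul, add_zero]
  have hi0 := Finset.sum_eq_zero_iff.1 hdefect i hi
  rw [mul_eq_zero, or_iff_right hwi, tsub_eq_zero_iff_le] at hi0
  exact le_antisymm (hf i hi) hi0

theorem Set.Finite.smul_set_eq_of_subset {G α : Type*} [Group G] [MulAction G α] {A : Set α}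
    (hA : A.Finite) {g : G} (h : g • A ⊆ A) : g • A = A :=
  Set.eq_of_subset_of_ncard_le h (Set.ncard_smul_set g A).ge hA

namespace MeasureTheory.Measure

variable {K : Type*} [MeasurableSpace K] [MeasurableSingletonClass K]

theorem finite_setOf_le_measure_singleton (μ : Measure K) [IsFiniteMeasure μ] {c : ℝ≥0∞}
    (hc : 0 < c) : {x : K | c ≤ μ {x}}.Finite :=
  finite_const_le_meas_of_disjoint_iUnion μ hc measurableSet_singleton
    (fun _ _ h => Set.disjoint_singleton.2 h) (measure_ne_top μ _)

theorem exists_measure_singleton_maximal (μ : Measure K) [IsFiniteMeasure μ]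
    (h : ∃ x, 0 < μ {x}) : ∃ x, 0 < μ {x} ∧ ∀ y, μ {y} ≤ μ {x} := by
  obtain ⟨x₀, hx₀⟩ := h
  obtain ⟨x, hx, hmax⟩ := Set.exists_max_image _ (fun y => μ {y})
    (finite_setOf_le_measure_singleton μ hx₀) ⟨x₀, le_refl (μ {x₀})⟩
  refine ⟨x, hx₀.trans_le hx, fun y => ?_⟩
  by_cases hy : μ {x₀} ≤ μ {y}
  · exact hmax y hy
  · exact (not_le.1 hy).le.trans hx

end MeasureTheory.Measure

namespace ProbabilityTheory

theorem map_smul_uniformOn {G K : Type*} [Group G] [MulAction G K] [MeasurableSpace K]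
    [MeasurableSingletonClass K] {g : G} (hg : Measurable (g • · : K → K)) {A : Set K}
    (hA : g • A = A) : (uniformOn A).map (g • ·) = uniformOn A := by
  ext B hB
  have hA' : g⁻¹ • A = A := inv_smul_eq_iff.2 hA.symm
  have hcount : Measure.count (g⁻¹ • (A ∩ B)) = Measure.count (A ∩ B) :=
    Measure.count_injective_image (MulAction.injective g⁻¹) (A ∩ B)
  rw [Measure.map_apply hg hB, uniformOn, cond_apply' (hg hB), cond_apply' hB, Set.preimage_smul,
    ← hcount, Set.smul_set_inter, hA']

end ProbabilityTheory

section Stationary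

variable {G K : Type*} [Group G] [MulAction G K] [MeasurableSpace K] [MeasurableSingletonClass K]
  {S : Finset G} {p : G → ℝ≥0∞} {μ : Measure K}

theorem measure_singleton_eq_sum_of_stationary (hmeas : ∀ g : G, Measurable (g • · : K → K))
    (hstat : μ = ∑ s ∈ S, p s • μ.map (s • ·)) (x : K) :
    μ {x} = ∑ s ∈ S, p s * μ {s⁻¹ • x} := by
  conv_lhs => rw [hstat]
  rw [Measure.finsetSum_apply]
  refine Finset.sum_congr rfl fun s _ => ?_
  rw [Measure.smul_apply, smul_eq_mul, Measure.map_apply (hmeas s) (measurableSet_singleton x),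
    Set.preimage_smul, Set.smul_set_singleton]

theorem measure_singleton_inv_smul_eq_of_stationary (hmeas : ∀ g : G, Measurable (g • · : K → K))
    (hstat : μ = ∑ s ∈ S, p s • μ.map (s • ·)) (hsum : ∑ s ∈ S, p s = 1) {m : ℝ≥0∞}
    (hm : m ≠ ∞) (hle : ∀ y, μ {y} ≤ m) {x : K} (hx : μ {x} = m) {s : G} (hs : s ∈ S)
    (hps : p s ≠ 0) : μ {s⁻¹ • x} = m :=
  ENNReal.eq_of_sum_mul_eq_of_le hm hsum (fun _ _ => hle _)
    ((measure_singleton_eq_sum_of_stationary hmeas hstat x).symm.trans hx) hs hps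

end Stationary

theorem stmt7_general {G K : Type*} [Group G] [MetricSpace K]
    [MeasurableSpace K] [BorelSpace K] [MulAction G K]
    (hcont : ∀ g : G, Continuous fun x : K => g • x)
    (S : Finset G) (p : G → ENNReal)
    (hp : ∀ s ∈ S, 0 < p s) (hsum : ∑ s ∈ S, p s = 1)
    (μ : Measure K) [IsProbabilityMeasure μ]
    (hstat : μ = ∑ s ∈ S, p s • Measure.map (fun x : K => s • x) μ)
    (hatom : ∃ x : K, 0 < μ {x}) :
    (∃ x : K, Set.Finite {y : K | ∃ g ∈ Subgroup.closure (S : Set G), g • x = y}) ∧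
      ∃ ν : Measure K, IsProbabilityMeasure ν ∧
        ∀ g ∈ Subgroup.closure (S : Set G), Measure.map (fun x : K => g • x) ν = ν := by
  have hmeas : ∀ g : G, Measurable (g • · : K → K) := fun g => (hcont g).measurable
  obtain ⟨x, hx, hmax⟩ := Measure.exists_measure_singleton_maximal μ hatom
  set A := {y : K | μ {y} = μ {x}}
  have hA : A.Finite := (Measure.finite_setOf_le_measure_singleton μ hx).subset fun y hy => hy.ge
  have hstab : Subgroup.closure (S : Set G) ≤ MulAction.stabilizer G A := by
    refine (Subgroup.closure_le _).2 fun s hs => ?_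
    suffices s⁻¹ ∈ MulAction.stabilizer G A from inv_inv s ▸ inv_mem this
    refine MulAction.mem_stabilizer_iff.2 (hA.smul_set_eq_of_subset ?_)
    rintro _ ⟨y, hy, rfl⟩
    exact measure_singleton_inv_smul_eq_of_stationary hmeas hstat hsum (measure_ne_top μ _) hmax
      hy hs (hp s hs).ne'
  refine ⟨⟨x, hA.subset ?_⟩, uniformOn A, isProbabilityMeasure_uniformOn hA ⟨x, rfl⟩,
    fun g hg => map_smul_uniformOn (hmeas g) (hstab hg)⟩
  rintro _ ⟨g, hg, rfl⟩
  rw [← hstab hg]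
  exact Set.smul_mem_smul_set rfl

/-- If a stationary (harmonic) measure for the random walk generated by a finite set
`S` with fully supported step distribution has an atom, then the generated group has
a finite orbit, hence an invariant probability measure. -/
theorem stmt7 {G K : Type*} [Group G] [MetricSpace K] [CompactSpace K]
    [MeasurableSpace K] [BorelSpace K] [MulAction G K]
    (hcont : ∀ g : G, Continuous fun x : K => g • x)
    (S : Finset G) (p : G → ENNReal)
    (hp : ∀ s ∈ S, 0 < p s) (hsum : ∑ s ∈ S, p s = 1)
    (μ : Measure K) [IsProbabilityMeasure μ]
    (hstat : μ = ∑ s ∈ S, p s • Measure.map (fun x : K => s • x) μ)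
    (hatom : ∃ x : K, 0 < μ {x}) :
    (∃ x : K, Set.Finite {y : K | ∃ g ∈ Subgroup.closure (S : Set G), g • x = y}) ∧
      ∃ ν : Measure K, IsProbabilityMeasure ν ∧
        ∀ g ∈ Subgroup.closure (S : Set G), Measure.map (fun x : K => g • x) ν = ν :=
  stmt7_general hcont S p hp hsum μ hstat hatom
end

section
/- Let μ be a stationary measure for a random walk as above which is not invariant under some generator, and set J(ω,x) = d(f_{ω₀}⁻¹)_*μ/dμ (x). Then h(μ) = −∫∫ log J(ω,x) dμ(x) dℙ(ω) is strictly positive (possibly +∞). -/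
/-! With `νₛ = (s⁻¹ • ·)_* μ`, stationarity gives `μ ≥ p s • (s • ·)_* μ`, hence `μ ≪ νₛ`, and
then `∫ log (dνₛ/dμ) dμ = -KL(μ ‖ νₛ)`. So `h(μ)` is the `p`-weighted sum of the divergences
`KL(μ ‖ νₛ)`; each is nonnegative by Gibbs' inequality and vanishes only if `νₛ = μ`. -/

open MeasureTheory InformationTheory

section Gibbs

variable {α : Type*} [MeasurableSpace α] {μ ν : Measure α} [IsFiniteMeasure μ]
  [IsFiniteMeasure ν]

lemma integral_llr_eq_neg_toReal_klDiv (hμν : μ ≪ ν) (h_eq : μ Set.univ = ν Set.univ) :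
    ∫ x, llr ν μ x ∂μ = -(klDiv μ ν).toReal := by
  rw [toReal_klDiv_of_measure_eq hμν h_eq, ← integral_neg]
  exact integral_congr_ae (neg_llr hμν).symm

lemma toReal_klDiv_pos (hμν : μ ≪ ν) (h_int : Integrable (llr ν μ) μ) (hne : μ ≠ ν) :
    0 < (klDiv μ ν).toReal := by
  have h_int' : Integrable (llr μ ν) μ :=
    integrable_neg_iff.mp (h_int.congr (neg_llr hμν).symm)
  exact ENNReal.toReal_pos (klDiv_eq_zero_iff.not.mpr hne) (klDiv_ne_top hμν h_int')

end Gibbs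

section Translates

variable {G α : Type*} [Group G] [MulAction G α] [MeasurableSpace α] [MeasurableConstSMul G α]
  (μ : Measure α) (g : G)

lemma map_inv_smul_map_smul : (μ.map (g • ·)).map (g⁻¹ • ·) = μ := by
  rw [Measure.map_map (measurable_const_smul _) (measurable_const_smul _)]
  simp [Function.comp_def]

lemma map_smul_map_inv_smul : (μ.map (g⁻¹ • ·)).map (g • ·) = μ := by
  simpa using map_inv_smul_map_smul μ g⁻¹

lemma map_inv_smul_eq_self_iff : μ.map (g⁻¹ • ·) = μ ↔ μ.map (g • ·) = μ := by
  constructor <;> intro h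
  · conv_lhs => rw [← h, map_smul_map_inv_smul]
  · conv_lhs => rw [← h, map_inv_smul_map_smul]

lemma absolutelyContinuous_map_inv_smul_of_eq_sum {S : Finset G} {w : G → ENNReal}
    (hμ : μ = ∑ s ∈ S, w s • μ.map (s • ·)) (hg : g ∈ S) (hw : w g ≠ 0) :
    μ ≪ μ.map (g⁻¹ • ·) := by
  have hle : w g • μ.map (g • ·) ≤ μ := by
    conv_rhs => rw [hμ]
    exact Finset.single_le_sum (f := fun s => w s • μ.map (s • ·))
      (fun _ _ => Measure.zero_le _) hg
  have hle' := Measure.map_mono hle (measurable_const_smul g⁻¹)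
  rw [Measure.map_smul, map_inv_smul_map_smul] at hle'
  exact (Measure.absolutelyContinuous_smul hw).trans (Measure.absolutelyContinuous_of_le hle')

end Translates

theorem stmt8_general {G K : Type*} [Group G] [MetricSpace K]
    [MeasurableSpace K] [BorelSpace K] [MulAction G K]
    (hcont : ∀ g : G, Continuous fun x : K => g • x)
    (S : Finset G) (p : G → ℝ)
    (hp : ∀ s ∈ S, 0 < p s)
    (μ : Measure K) [IsProbabilityMeasure μ]
    (hstat : μ = ∑ s ∈ S, ENNReal.ofReal (p s) • Measure.map (fun x : K => s • x) μ)
    (hninv : ∃ s ∈ S, Measure.map (fun x : K => s • x) μ ≠ μ) :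
    (∃ s ∈ S, ¬ Integrable
        (fun x => Real.log ((Measure.map (fun y : K => s⁻¹ • y) μ).rnDeriv μ x).toReal) μ) ∨
      0 < -∑ s ∈ S, p s *
        ∫ x, Real.log ((Measure.map (fun y : K => s⁻¹ • y) μ).rnDeriv μ x).toReal ∂μ := by
  have : MeasurableConstSMul G K := ⟨fun g => (hcont g).measurable⟩
  by_cases hint : ∀ s ∈ S, Integrable (llr (μ.map (s⁻¹ • ·)) μ) μ
  swap
  · push Not at hint
    exact Or.inl hint
  have hac : ∀ s ∈ S, μ ≪ μ.map (s⁻¹ • ·) := fun s hs =>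
    absolutelyContinuous_map_inv_smul_of_eq_sum μ s hstat hs (ENNReal.ofReal_pos.mpr (hp s hs)).ne'
  have hmass : ∀ s : G, μ Set.univ = μ.map (s⁻¹ • ·) Set.univ := fun s => by
    rw [Measure.map_apply (measurable_const_smul _) MeasurableSet.univ, Set.preimage_univ]
  have hentropy : -∑ s ∈ S, p s * ∫ x, llr (μ.map (s⁻¹ • ·)) μ x ∂μ =
      ∑ s ∈ S, p s * (klDiv μ (μ.map (s⁻¹ • ·))).toReal := by
    rw [← Finset.sum_neg_distrib]
    refine Finset.sum_congr rfl fun s hs => ?_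
    rw [integral_llr_eq_neg_toReal_klDiv (hac s hs) (hmass s), mul_neg, neg_neg]
  obtain ⟨s₀, hs₀, hne⟩ := hninv
  have hne' : μ ≠ μ.map (s₀⁻¹ • ·) := fun h => hne ((map_inv_smul_eq_self_iff μ s₀).mp h.symm)
  right
  change 0 < -∑ s ∈ S, p s * ∫ x, llr (μ.map (s⁻¹ • ·)) μ x ∂μ
  rw [hentropy]
  exact Finset.sum_pos' (fun s hs => mul_nonneg (hp s hs).le ENNReal.toReal_nonneg)
    ⟨s₀, hs₀, mul_pos (hp s₀ hs₀) (toReal_klDiv_pos (hac s₀ hs₀) (hint s₀ hs₀) hne')⟩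

/-- Positivity of the entropy `h(μ) = -∫∫ log J` for a stationary measure `μ` which
is not invariant under some generator. Here
`J(s, x) = d(s⁻¹)_*μ/dμ (x)` and
`h(μ) = -∑_{s ∈ S} p s ∫ log J(s, x) dμ(x)`. The entropy is `+∞` exactly when some
`log J(s, ·)` fails to be `μ`-integrable (its positive part always is), which gives
the first alternative; otherwise `h(μ)` is a strictly positive real number. -/
theorem stmt8 {G K : Type*} [Group G] [MetricSpace K] [CompactSpace K]
    [MeasurableSpace K] [BorelSpace K] [MulAction G K]
    (hcont : ∀ g : G, Continuous fun x : K => g • x)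
    (S : Finset G) (p : G → ℝ)
    (hp : ∀ s ∈ S, 0 < p s) (hsum : ∑ s ∈ S, p s = 1)
    (μ : Measure K) [IsProbabilityMeasure μ]
    (hstat : μ = ∑ s ∈ S, ENNReal.ofReal (p s) • Measure.map (fun x : K => s • x) μ)
    (hninv : ∃ s ∈ S, Measure.map (fun x : K => s • x) μ ≠ μ) :
    (∃ s ∈ S, ¬ Integrable
        (fun x => Real.log ((Measure.map (fun y : K => s⁻¹ • y) μ).rnDeriv μ x).toReal) μ) ∨
      0 < -∑ s ∈ S, p s *
        ∫ x, Real.log ((Measure.map (fun y : K => s⁻¹ • y) μ).rnDeriv μ x).toReal ∂μ :=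
  stmt8_general hcont S p hp μ hstat hninv
end

section
/- Let μ₁ and μ₂ be Borel probability measures on ℝ with μ₂ absolutely continuous with respect to μ₁, and J = dμ₂/dμ₁. Then for μ₁-almost every x, J(x) = lim of μ₂(I)/μ₁(I) as I ranges over open intervals containing x with |I| → 0. Moreover, if q(x) = sup{ μ₂(I)/μ₁(I) : I an open interval containing x }, then log⁺(q) = max(log q, 0) is integrable with respect to μ₁. -/
/-!
Any finite cover of a compact set by open intervals can be thinned to a subcover in which every
point lies in at most two intervals, since of three intervals through a common point one lies in
the union of the other two. Summing over such a subcover gives the weak type bound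
`t * μ₁ {q > t} ≤ 2 * μ₂ ℝ` for the maximal ratio `q`, with no condition on `μ₁`; it yields
`q < ∞` a.e. and, through the layer cake formula, the integrability of `log⁺ q`.

For the differentiation write `μ₂ = J • μ₁` and approximate `J` in `L¹(μ₁)` by a continuous `g`.
Interval averages of `g` converge everywhere, and the weak type bound for `|J - g| • μ₁` together
with Markov's inequality shows that the averages of `J` fail to settle within `3e` of `J x` only
on a set of measure at most `3 ‖J - g‖₁ / e`.
-/
open MeasureTheory Set Filter Topology
open scoped Finset ENNReal

lemma Ioo_subset_Ioo_union_Ioo_of_mem {x a b a₁ b₁ a₂ b₂ : ℝ} (h₁ : x ∈ Ioo a₁ b₁)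
    (h₂ : x ∈ Ioo a₂ b₂) (ha : a₁ ≤ a) (hb : b ≤ b₂) :
    Ioo a b ⊆ Ioo a₁ b₁ ∪ Ioo a₂ b₂ := by
  intro y hy
  rcases le_total y x with hyx | hxy
  · exact Or.inl ⟨ha.trans_lt hy.1, hyx.trans_lt h₁.2⟩
  · exact Or.inr ⟨h₂.1.trans_le hxy, hy.2.trans_le hb⟩

/-- Of intervals through a common point, any one other than the interval reaching furthest left
and the interval reaching furthest right is covered by these two. -/
lemma exists_Ioo_subset_biUnion_erase {U : Finset (ℝ × ℝ)} {x : ℝ} (hU : 2 < #U)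
    (hx : ∀ p ∈ U, x ∈ Ioo p.1 p.2) :
    ∃ p ∈ U, Ioo p.1 p.2 ⊆ ⋃ q ∈ U.erase p, Ioo q.1 q.2 := by
  have hne : U.Nonempty := Finset.card_pos.1 (by omega)
  obtain ⟨i, hi, hi_min⟩ := U.exists_min_image Prod.fst hne
  obtain ⟨j, hj, hj_max⟩ := U.exists_max_image Prod.snd hne
  obtain ⟨k, hk, hkij⟩ :=
    Finset.exists_mem_notMem_of_card_lt_card (s := {i, j}) (Finset.card_le_two.trans_lt hU)
  simp only [Finset.mem_insert, Finset.mem_singleton, not_or] at hkij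
  refine ⟨k, hk, (Ioo_subset_Ioo_union_Ioo_of_mem (hx i hi) (hx j hj) (hi_min k hk)
    (hj_max k hk)).trans (union_subset ?_ ?_)⟩
  · exact subset_biUnion_of_mem (u := fun q : ℝ × ℝ => Ioo q.1 q.2)
      (Finset.mem_erase.2 ⟨Ne.symm hkij.1, hi⟩)
  · exact subset_biUnion_of_mem (u := fun q : ℝ × ℝ => Ioo q.1 q.2)
      (Finset.mem_erase.2 ⟨Ne.symm hkij.2, hj⟩)

lemma exists_subcover_card_filter_mem_Ioo_le_two {S : Finset (ℝ × ℝ)} {K : Set ℝ}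
    (hK : K ⊆ ⋃ p ∈ S, Ioo p.1 p.2) :
    ∃ T ⊆ S, K ⊆ ⋃ p ∈ T, Ioo p.1 p.2 ∧ ∀ x, #{p ∈ T | x ∈ Ioo p.1 p.2} ≤ 2 := by
  induction S using Finset.strongInduction with
  | H S ih =>
    by_cases hmult : ∀ x, #{p ∈ S | x ∈ Ioo p.1 p.2} ≤ 2
    · exact ⟨S, Subset.rfl, hK, hmult⟩
    push Not at hmult
    obtain ⟨x, hx⟩ := hmult
    obtain ⟨p, hpU, hp⟩ :=
      exists_Ioo_subset_biUnion_erase hx fun q hq => (Finset.mem_filter.1 hq).2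
    have hpS : p ∈ S := (Finset.mem_filter.1 hpU).1
    have hK' : K ⊆ ⋃ q ∈ S.erase p, Ioo q.1 q.2 := by
      rw [← Finset.insert_erase hpS, Finset.set_biUnion_insert] at hK
      refine hK.trans (union_subset (hp.trans ?_) Subset.rfl)
      exact biUnion_subset_biUnion_left fun q hq =>
        Finset.erase_subset_erase p (Finset.filter_subset _ S) hq
    obtain ⟨T, hTS, hTK, hT⟩ := ih _ (Finset.erase_ssubset hpS) hK'
    exact ⟨T, hTS.trans (Finset.erase_subset p S), hTK, hT⟩

lemma sum_measure_le_mul_measure_univ_of_card_filter_mem_le {α ι : Type*} [MeasurableSpace α]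
    (ν : Measure α) {T : Finset ι} {s : ι → Set α} [∀ x, DecidablePred fun i => x ∈ s i]
    (hs : ∀ i ∈ T, MeasurableSet (s i)) {n : ℕ} (hT : ∀ x, #{i ∈ T | x ∈ s i} ≤ n) :
    ∑ i ∈ T, ν (s i) ≤ n * ν univ := by
  calc ∑ i ∈ T, ν (s i) = ∫⁻ x, ∑ i ∈ T, (s i).indicator 1 x ∂ν := by
        rw [lintegral_finsetSum _ fun i hi => measurable_one.indicator (hs i hi)]
        exact Finset.sum_congr rfl fun i hi => (lintegral_indicator_one (hs i hi)).symm
    _ ≤ ∫⁻ _, (n : ℝ≥0∞) ∂ν := by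
        refine lintegral_mono fun x => ?_
        simp only [indicator_apply, Pi.one_apply, Finset.sum_boole]
        exact_mod_cast hT x
    _ = n * ν univ := lintegral_const _

noncomputable def maximalRatio (μ ρ : Measure ℝ) (x : ℝ) : ℝ≥0∞ :=
  ⨆ (a : ℝ) (b : ℝ) (_ : a < x) (_ : x < b), ρ (Ioo a b) / μ (Ioo a b)

section MaximalRatio

variable (μ ρ : Measure ℝ)

lemma div_le_maximalRatio {a b x : ℝ} (hx : x ∈ Ioo a b) :
    ρ (Ioo a b) / μ (Ioo a b) ≤ maximalRatio μ ρ x :=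
  le_iSup₂_of_le a b (le_iSup₂_of_le (α := ℝ≥0∞) hx.1 hx.2 le_rfl)

lemma setOf_lt_maximalRatio (t : ℝ≥0∞) :
    {x | t < maximalRatio μ ρ x} =
      ⋃ p ∈ {p : ℝ × ℝ | t < ρ (Ioo p.1 p.2) / μ (Ioo p.1 p.2)}, Ioo p.1 p.2 := by
  ext x
  simp only [maximalRatio, mem_ofPred_eq, lt_iSup_iff, mem_iUnion, mem_Ioo, Prod.exists,
    exists_prop]
  grind

lemma isOpen_setOf_lt_maximalRatio (t : ℝ≥0∞) : IsOpen {x | t < maximalRatio μ ρ x} := by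
  rw [setOf_lt_maximalRatio]
  exact isOpen_biUnion fun _ _ => isOpen_Ioo

lemma measurable_maximalRatio : Measurable (maximalRatio μ ρ) :=
  measurable_of_Ioi fun t => (isOpen_setOf_lt_maximalRatio μ ρ t).measurableSet

lemma mul_measure_lt_maximalRatio_le [IsLocallyFiniteMeasure μ] (t : ℝ≥0∞) :
    t * μ {x | t < maximalRatio μ ρ x} ≤ 2 * ρ univ := by
  rw [(isOpen_setOf_lt_maximalRatio μ ρ t).measure_eq_iSup_isCompact, ENNReal.mul_iSup]
  refine iSup_le fun K => ?_
  rw [ENNReal.mul_iSup]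
  refine iSup_le fun hKU => ?_
  rw [ENNReal.mul_iSup]
  refine iSup_le fun hK => ?_
  rw [setOf_lt_maximalRatio] at hKU
  obtain ⟨P, hP, hPfin, hKP⟩ := hK.elim_finite_subcover_image (fun _ _ => isOpen_Ioo) hKU
  obtain ⟨T, hTP, hKT, hT⟩ := exists_subcover_card_filter_mem_Ioo_le_two
    (S := hPfin.toFinset) (K := K) (by simpa using hKP)
  calc t * μ K ≤ t * ∑ p ∈ T, μ (Ioo p.1 p.2) := by
        gcongr
        exact (measure_mono hKT).trans (measure_biUnion_finset_le T _)
    _ = ∑ p ∈ T, t * μ (Ioo p.1 p.2) := Finset.mul_sum _ _ _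
    _ ≤ ∑ p ∈ T, ρ (Ioo p.1 p.2) := by
        refine Finset.sum_le_sum fun p hp => ENNReal.mul_le_of_le_div ?_
        exact (hP (hPfin.mem_toFinset.1 (hTP hp))).le
    _ ≤ 2 * ρ univ :=
        sum_measure_le_mul_measure_univ_of_card_filter_mem_le ρ (fun _ _ => measurableSet_Ioo) hT

end MaximalRatio

section WeakType

variable {α : Type*} [MeasurableSpace α] {μ : Measure α} {F : α → ℝ≥0∞} {C : ℝ≥0∞}

lemma ae_lt_top_of_forall_mul_measure_lt_le (hC : C ≠ ∞)
    (h : ∀ t, t * μ {x | t < F x} ≤ C) : ∀ᵐ x ∂μ, F x < ∞ := by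
  simp only [ae_iff, not_lt, top_le_iff]
  by_contra h0
  obtain ⟨n, hn⟩ := ENNReal.exists_nat_mul_gt h0 hC
  have hsub : {x | F x = ∞} ⊆ {x | (n : ℝ≥0∞) < F x} := fun x (hx : F x = ∞) => by
    simp [hx]
  exact (hn.trans_le (mul_le_mul_right (measure_mono hsub) _)).not_ge (h n)

lemma integrable_posLog_toReal_of_forall_mul_measure_lt_le (hF : Measurable F) (hC : C ≠ ∞)
    (h : ∀ t, t * μ {x | t < F x} ≤ C) :
    Integrable (fun x => Real.posLog (F x).toReal) μ := by
  have hmeas : Measurable fun x => Real.posLog (F x).toReal :=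
    Real.continuous_posLog.measurable.comp hF.ennreal_toReal
  have htail : ∀ s ∈ Ioi (0 : ℝ),
      μ {x | s < Real.posLog (F x).toReal} ≤ C * ENNReal.ofReal (Real.exp (-s)) := by
    intro s (hs : 0 < s)
    have hsub : {x | s < Real.posLog (F x).toReal} ⊆ {x | ENNReal.ofReal (Real.exp s) < F x} := by
      intro x (hx : s < Real.posLog (F x).toReal)
      have hlog : s < Real.log (F x).toReal := by
        simpa [Real.posLog, not_lt.2 hs.le] using hx
      have hr : 0 < (F x).toReal :=
        one_pos.trans ((Real.log_pos_iff ENNReal.toReal_nonneg).1 (hs.trans hlog))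
      exact ((ENNReal.ofReal_lt_ofReal_iff hr).2 ((Real.lt_log_iff_exp_lt hr).1 hlog)).trans_le
        ENNReal.ofReal_toReal_le
    calc μ {x | s < Real.posLog (F x).toReal}
        ≤ ENNReal.ofReal (Real.exp (-s)) * (ENNReal.ofReal (Real.exp s) *
            μ {x | ENNReal.ofReal (Real.exp s) < F x}) := by
          rw [← mul_assoc, ← ENNReal.ofReal_mul (Real.exp_pos _).le, ← Real.exp_add,
            neg_add_cancel, Real.exp_zero, ENNReal.ofReal_one, one_mul]
          exact measure_mono hsub
      _ ≤ C * ENNReal.ofReal (Real.exp (-s)) := by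
          rw [mul_comm C]
          gcongr
          exact h _
  refine ⟨hmeas.aestronglyMeasurable, ?_⟩
  rw [hasFiniteIntegral_iff_ofReal (.of_forall fun _ => Real.posLog_nonneg),
    lintegral_eq_lintegral_meas_lt μ (.of_forall fun _ => Real.posLog_nonneg)
      hmeas.aemeasurable]
  calc ∫⁻ s in Ioi 0, μ {x | s < Real.posLog (F x).toReal}
      ≤ ∫⁻ s in Ioi 0, C * ENNReal.ofReal (Real.exp (-s)) :=
        setLIntegral_mono' measurableSet_Ioi htail
    _ = C * ∫⁻ s in Ioi 0, ENNReal.ofReal (Real.exp (-s)) :=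
        lintegral_const_mul _ (by fun_prop)
    _ < ∞ := by
        refine ENNReal.mul_lt_top hC.lt_top ?_
        simpa using (exp_neg_integrableOn_Ioi 0 one_pos).lintegral_lt_top

end WeakType

lemma eventually_mem_Ioo_and_Ioo_subset {x : ℝ} {t : Set ℝ} (ht : t ∈ 𝓝 x) :
    ∀ᶠ p in 𝓝[<] x ×ˢ 𝓝[>] x, x ∈ Ioo p.1 p.2 ∧ Ioo p.1 p.2 ⊆ t := by
  obtain ⟨l, u, ⟨hlx, hxu⟩, hlut⟩ := mem_nhds_iff_exists_Ioo_subset.1 ht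
  filter_upwards [prod_mem_prod (Ioo_mem_nhdsLT hlx) (Ioo_mem_nhdsGT hxu)] with p ⟨ha, hb⟩
  exact ⟨⟨ha.2, hb.1⟩, (Ioo_subset_Ioo ha.1.le hb.2.le).trans hlut⟩

lemma exists_pos_forall_of_eventually_nhdsLT_prod_nhdsGT {x : ℝ} {P : ℝ → ℝ → Prop}
    (h : ∀ᶠ p in 𝓝[<] x ×ˢ 𝓝[>] x, P p.1 p.2) :
    ∃ η > 0, ∀ a b, a < x → x < b → b - a < η → P a b := by
  obtain ⟨⟨l, u⟩, ⟨hl, hu⟩, hP⟩ := ((nhdsLT_basis x).prod (nhdsGT_basis x)).eventually_iff.1 h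
  refine ⟨min (x - l) (u - x), lt_min (sub_pos.2 hl) (sub_pos.2 hu), fun a b ha hb hab => ?_⟩
  have := lt_min_iff.1 hab
  have hmem : (a, b) ∈ Ioo l x ×ˢ Ioo x u := ⟨⟨by linarith, ha⟩, hb, by linarith⟩
  exact hP hmem

lemma abs_setAverage_sub_le {α : Type*} [MeasurableSpace α] {μ : Measure α} {s : Set α}
    {f g : α → ℝ} {c e : ℝ} (hs₀ : μ s ≠ 0) (hs : μ s ≠ ∞) (hf : IntegrableOn f s μ)
    (hg : IntegrableOn g s μ) (hgc : ∀ y ∈ s, |g y - c| ≤ e) :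
    |⨍ y in s, f y ∂μ - c| ≤ ⨍ y in s, |f y - g y| ∂μ + e := by
  have hm : 0 < μ.real s := ENNReal.toReal_pos hs₀ hs
  have hsplit : ⨍ y in s, f y ∂μ - c =
      (μ.real s)⁻¹ * ((∫ y in s, (f y - g y) ∂μ) + ∫ y in s, (g y - c) ∂μ) := by
    rw [setAverage_eq, smul_eq_mul, integral_sub hf hg, integral_sub hg (integrableOn_const hs),
      setIntegral_const, smul_eq_mul]
    field_simp
    ring
  have hgc' : |∫ y in s, (g y - c) ∂μ| ≤ e * μ.real s :=
    norm_setIntegral_le_of_norm_le_const (f := fun y => g y - c) hs.lt_top hgc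
  rw [hsplit, setAverage_eq, smul_eq_mul, abs_mul, abs_inv, abs_of_pos hm]
  calc (μ.real s)⁻¹ * |(∫ y in s, (f y - g y) ∂μ) + ∫ y in s, (g y - c) ∂μ|
      ≤ (μ.real s)⁻¹ * ((∫ y in s, |f y - g y| ∂μ) + e * μ.real s) := by
        gcongr
        exact (abs_add_le _ _).trans (add_le_add abs_integral_le_integral_abs hgc')
    _ = (μ.real s)⁻¹ * ∫ y in s, |f y - g y| ∂μ + e := by
        field_simp

section Differentiation

variable {μ : Measure ℝ} [IsLocallyFiniteMeasure μ] {f g : ℝ → ℝ}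

lemma eventually_abs_setAverage_Ioo_sub_le (hf : Integrable f μ) (hg : Integrable g μ)
    {x e : ℝ} (he : 0 < e) (hgx : ContinuousAt g x) (hx : x ∈ μ.support)
    (hM : maximalRatio μ (μ.withDensity fun y => ‖f y - g y‖ₑ) x ≤ ENNReal.ofReal e)
    (hfgx : ‖f x - g x‖ₑ < ENNReal.ofReal e) :
    ∀ᶠ p in 𝓝[<] x ×ˢ 𝓝[>] x, |⨍ y in Ioo p.1 p.2, f y ∂μ - f x| ≤ 3 * e := by
  have hgt : {y | |g y - g x| ≤ e} ∈ 𝓝 x := by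
    filter_upwards [Metric.continuousAt_iff'.1 hgx e he] with y hy
    exact (Real.dist_eq _ _ ▸ hy).le
  filter_upwards [eventually_mem_Ioo_and_Ioo_subset hgt] with p ⟨hxI, hIt⟩
  set I := Ioo p.1 p.2
  have hI₀ : μ I ≠ 0 := ((Measure.mem_support_iff_forall x).1 hx I (isOpen_Ioo.mem_nhds hxI)).ne'
  have hI : μ I ≠ ∞ := measure_Ioo_lt_top.ne
  have havg : ⨍ y in I, |f y - g y| ∂μ ≤ e := by
    refine (ENNReal.ofReal_le_ofReal_iff he.le).1 ?_
    rw [ofReal_setAverage (f := fun y => |f y - g y|) (hf.sub hg).abs.integrableOn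
      (.of_forall fun _ => abs_nonneg _)]
    calc (∫⁻ y in I, ENNReal.ofReal |f y - g y| ∂μ) / μ I
        = (μ.withDensity fun y => ‖f y - g y‖ₑ) I / μ I := by
          rw [withDensity_apply _ measurableSet_Ioo]
          simp_rw [Real.enorm_eq_ofReal_abs]
          rfl
      _ ≤ ENNReal.ofReal e := (div_le_maximalRatio μ _ hxI).trans hM
  have hfgx' : |g x - f x| ≤ e := by
    rw [Real.enorm_eq_ofReal_abs, ENNReal.ofReal_lt_ofReal_iff he] at hfgx
    exact (abs_sub_comm (g x) (f x)).trans_le hfgx.le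
  calc |⨍ y in I, f y ∂μ - f x| ≤ |⨍ y in I, f y ∂μ - g x| + |g x - f x| := abs_sub_le _ _ _
    _ ≤ (⨍ y in I, |f y - g y| ∂μ + e) + e :=
        add_le_add (abs_setAverage_sub_le hI₀ hI hf.integrableOn hg.integrableOn hIt) hfgx'
    _ ≤ 3 * e := by linarith

lemma ofReal_mul_measure_not_eventually_abs_setAverage_Ioo_sub_le (hf : Integrable f μ)
    (hg : Integrable g μ) (hgc : Continuous g) {e : ℝ} (he : 0 < e) :
    ENNReal.ofReal e * μ {x | ¬ ∀ᶠ p in 𝓝[<] x ×ˢ 𝓝[>] x,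
      |⨍ y in Ioo p.1 p.2, f y ∂μ - f x| ≤ 3 * e} ≤ 3 * ∫⁻ y, ‖f y - g y‖ₑ ∂μ := by
  set ρ := μ.withDensity fun y => ‖f y - g y‖ₑ
  set A := {x | ENNReal.ofReal e < maximalRatio μ ρ x}
  set B := {x | ENNReal.ofReal e ≤ ‖f x - g x‖ₑ}
  have hsub : {x | ¬ ∀ᶠ p in 𝓝[<] x ×ˢ 𝓝[>] x, |⨍ y in Ioo p.1 p.2, f y ∂μ - f x| ≤ 3 * e} ⊆
      μ.supportᶜ ∪ A ∪ B := by
    intro x hx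
    by_contra hx'
    simp only [A, B, mem_union, mem_compl_iff, not_or, not_not, mem_ofPred_eq, not_lt,
      not_le] at hx'
    exact hx (eventually_abs_setAverage_Ioo_sub_le hf hg he hgc.continuousAt hx'.1.1 hx'.1.2
      hx'.2)
  have hρ : ρ univ = ∫⁻ y, ‖f y - g y‖ₑ ∂μ := by
    rw [withDensity_apply _ MeasurableSet.univ, Measure.restrict_univ]
  calc ENNReal.ofReal e * μ _ ≤ ENNReal.ofReal e * (μ μ.supportᶜ + μ A + μ B) := by
        gcongr
        exact (measure_mono hsub).trans ((measure_union_le _ _).trans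
          (add_le_add_left (measure_union_le _ _) _))
    _ = ENNReal.ofReal e * μ A + ENNReal.ofReal e * μ B := by
        rw [Measure.measure_compl_support, zero_add, mul_add]
    _ ≤ 2 * ρ univ + ∫⁻ y, ‖f y - g y‖ₑ ∂μ :=
        add_le_add (mul_measure_lt_maximalRatio_le μ ρ _)
          (mul_meas_ge_le_lintegral₀ (hf.sub hg).aemeasurable.enorm _)
    _ = 3 * ∫⁻ y, ‖f y - g y‖ₑ ∂μ := by
        rw [hρ]
        ring

lemma ae_eventually_abs_setAverage_Ioo_sub_le (hf : Integrable f μ) {e : ℝ} (he : 0 < e) :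
    ∀ᵐ x ∂μ, ∀ᶠ p in 𝓝[<] x ×ˢ 𝓝[>] x, |⨍ y in Ioo p.1 p.2, f y ∂μ - f x| ≤ 3 * e := by
  rw [ae_iff]
  set m := μ {x | ¬ ∀ᶠ p in 𝓝[<] x ×ˢ 𝓝[>] x, |⨍ y in Ioo p.1 p.2, f y ∂μ - f x| ≤ 3 * e}
  have hm : ∀ ε : ℝ≥0∞, ε ≠ 0 → ENNReal.ofReal e * m ≤ 3 * ε := fun ε hε => by
    obtain ⟨g, -, hfg, hgc, hg⟩ := hf.exists_hasCompactSupport_lintegral_sub_le hε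
    exact (ofReal_mul_measure_not_eventually_abs_setAverage_Ioo_sub_le hf hg hgc he).trans
      (by gcongr)
  have hm0 : ENNReal.ofReal e * m = 0 := by
    refine le_antisymm (ENNReal.le_of_forall_pos_le_add fun δ hδ _ => ?_) zero_le
    rw [zero_add]
    convert hm (δ / 3) (by simpa using hδ.ne')
    rw [ENNReal.mul_div_cancel (by norm_num) (by norm_num)]
  simpa [not_le.2 he] using hm0

theorem ae_tendsto_setAverage_Ioo (hf : Integrable f μ) :
    ∀ᵐ x ∂μ, Tendsto (fun p : ℝ × ℝ => ⨍ y in Ioo p.1 p.2, f y ∂μ) (𝓝[<] x ×ˢ 𝓝[>] x)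
      (𝓝 (f x)) := by
  have h := ae_all_iff.2 fun n : ℕ =>
    ae_eventually_abs_setAverage_Ioo_sub_le hf (e := 1 / (n + 1)) Nat.one_div_pos_of_nat
  filter_upwards [h] with x hx
  refine Metric.tendsto_nhds.2 fun ε hε => ?_
  obtain ⟨n, hn⟩ := exists_nat_one_div_lt (div_pos hε three_pos)
  filter_upwards [hx n] with p hp
  rw [Real.dist_eq]
  linarith

end Differentiation

lemma measure_div_eq_ofReal_setAverage_toReal_rnDeriv {α : Type*} [MeasurableSpace α]
    {μ ν : Measure α} [IsFiniteMeasure ν] [SigmaFinite μ] (hνμ : ν ≪ μ) (s : Set α) :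
    ν s / μ s = ENNReal.ofReal (⨍ y in s, (ν.rnDeriv μ y).toReal ∂μ) := by
  rw [ofReal_setAverage Measure.integrable_toReal_rnDeriv.integrableOn
    (.of_forall fun _ => ENNReal.toReal_nonneg), ← Measure.setLIntegral_rnDeriv hνμ s]
  congr 1
  refine lintegral_congr_ae (ae_restrict_of_ae ?_)
  filter_upwards [Measure.rnDeriv_lt_top ν μ] with y hy
  exact (ENNReal.ofReal_toReal hy.ne).symm

theorem ae_tendsto_measure_Ioo_div {μ ν : Measure ℝ} [IsLocallyFiniteMeasure μ]
    [IsFiniteMeasure ν] (hνμ : ν ≪ μ) :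
    ∀ᵐ x ∂μ, Tendsto (fun p : ℝ × ℝ => ν (Ioo p.1 p.2) / μ (Ioo p.1 p.2)) (𝓝[<] x ×ˢ 𝓝[>] x)
      (𝓝 (ν.rnDeriv μ x)) := by
  filter_upwards [ae_tendsto_setAverage_Ioo (Measure.integrable_toReal_rnDeriv (μ := ν)),
    Measure.rnDeriv_lt_top ν μ] with x hx hx_top
  simp_rw [measure_div_eq_ofReal_setAverage_toReal_rnDeriv hνμ]
  rw [← ENNReal.ofReal_toReal hx_top.ne]
  exact ENNReal.tendsto_ofReal hx

/-- Differentiation of measures on `ℝ`: if `μ₂ ≪ μ₁`, then `μ₁`-a.e. the ratio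
`μ₂(I)/μ₁(I)` over open intervals `I ∋ x` with `|I| → 0` converges to the
Radon–Nikodym derivative, and moreover `log⁺` of the maximal ratio
`q(x) = sup { μ₂(I)/μ₁(I) : I open interval, x ∈ I }` is `μ₁`-integrable
(in particular `q` is `μ₁`-a.e. finite). -/
theorem stmt9 (μ₁ μ₂ : Measure ℝ) [IsProbabilityMeasure μ₁] [IsProbabilityMeasure μ₂]
    (hac : μ₂ ≪ μ₁) :
    (∀ᵐ x ∂μ₁, ∀ ε : ENNReal, 0 < ε → ∃ η > (0 : ℝ), ∀ a b : ℝ,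
      a < x → x < b → b - a < η →
        μ₂ (Set.Ioo a b) / μ₁ (Set.Ioo a b) ∈
          Set.Icc (μ₂.rnDeriv μ₁ x - ε) (μ₂.rnDeriv μ₁ x + ε)) ∧
    (∀ᵐ x ∂μ₁,
      (⨆ (a : ℝ) (b : ℝ) (_ : a < x) (_ : x < b),
        μ₂ (Set.Ioo a b) / μ₁ (Set.Ioo a b)) < ⊤) ∧
    Integrable (fun x => max (Real.log
      ((⨆ (a : ℝ) (b : ℝ) (_ : a < x) (_ : x < b),
        μ₂ (Set.Ioo a b) / μ₁ (Set.Ioo a b)).toReal)) 0) μ₁ := by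
  have hC : 2 * μ₂ univ ≠ ∞ := ENNReal.mul_ne_top ENNReal.ofNat_ne_top (measure_ne_top μ₂ univ)
  have hweak := mul_measure_lt_maximalRatio_le μ₁ μ₂
  refine ⟨?_, ae_lt_top_of_forall_mul_measure_lt_le hC hweak, ?_⟩
  · filter_upwards [ae_tendsto_measure_Ioo_div hac, Measure.rnDeriv_lt_top μ₂ μ₁]
      with x hx hx_top ε hε
    exact exists_pos_forall_of_eventually_nhdsLT_prod_nhdsGT
      ((ENNReal.tendsto_nhds hx_top.ne).1 hx ε hε)
  · exact (integrable_posLog_toReal_of_forall_mul_measure_lt_le (measurable_maximalRatio μ₁ μ₂)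
      hC hweak).congr (.of_forall fun _ => max_comm _ _)
end

section
/- Let (X_n) be a homogeneous Markov chain on a measurable state space E, φ : E → [0, C] measurable, and δ > 0 such that for every starting point x ∈ E, ℙ(Σ_{n≥0} φ(X_n) ≤ C | X₀ = x) ≥ δ. Then Σ_{n≥0} φ(X_n) is almost surely finite, integrable, and 𝔼[Σ_{n≥0} φ(X_n)] ≤ C/δ. -/
open MeasureTheory ProbabilityTheory Finset
open scoped ENNReal

/-!
If the tail sum `∑_{i ≥ n} φ(Xᵢ)` is still above `C`, count `φ(Xₙ)` as "excess"; along every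
trajectory, the partial sums exceed the total excess by at most `C`, since once a tail sum drops
to `C` the rest of the trajectory contributes at most `C`. By the Markov property at time `n`,
the tail sum from `n` exceeds `C` with probability at most `1 - δ` given `Xₙ`, so the expected
excess up to time `N` is at most `(1 - δ) a_N`, where `a_N` is the expected partial sum.
Hence `a_N ≤ C + (1 - δ) a_N`, i.e. `a_N ≤ C / δ` (as `a_N ≤ N C < ∞`), and monotone
convergence concludes.
-/

lemma ENNReal.sum_range_le_add_sum_ite_lt_tsum (f : ℕ → ℝ≥0∞) (C : ℝ≥0∞) (N : ℕ) :
    ∑ n ∈ range N, f n ≤ C + ∑ n ∈ range N, if C < ∑' i, f (i + n) then f n else 0 := by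
  induction N generalizing f with
  | zero => simp
  | succ N ih =>
    by_cases htail : C < ∑' i, f i
    · simp only [sum_range_succ', add_zero, if_pos htail]
      rw [← add_assoc]
      gcongr
      exact ih fun n => f (n + 1)
    · calc ∑ n ∈ range (N + 1), f n ≤ ∑' n, f n := ENNReal.sum_le_tsum _
        _ ≤ C := not_lt.mp htail
        _ ≤ _ := le_self_add

lemma ENNReal.le_div_of_le_add_one_sub_mul {a C δ : ℝ≥0∞} (ha : a ≠ ∞) (hδ0 : δ ≠ 0)
    (hδ1 : δ ≤ 1) (h : a ≤ C + (1 - δ) * a) : a ≤ C / δ := by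
  have hδa : δ * a + (1 - δ) * a ≤ C + (1 - δ) * a := by
    rwa [← add_mul, add_tsub_cancel_of_le hδ1, one_mul]
  have hfin : (1 - δ) * a ≠ ∞ := ENNReal.mul_ne_top (ENNReal.sub_ne_top ENNReal.one_ne_top) ha
  rw [ENNReal.le_div_iff_mul_le (Or.inl hδ0) (Or.inl (ne_top_of_le_ne_top ENNReal.one_ne_top hδ1)),
    mul_comm]
  exact (ENNReal.add_le_add_iff_right hfin).mp hδa

namespace MarkovChain

variable {E : Type*} [MeasurableSpace E]

def shift (n : ℕ) (ω : ℕ → E) : ℕ → E := fun k => ω (k + n)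

lemma measurable_shift (n : ℕ) : Measurable (shift (E := E) n) :=
  measurable_pi_lambda _ fun _ => measurable_pi_apply _

/-- `κ x` is the law of the trajectory of a homogeneous Markov chain started at `x`. -/
structure IsTrajectoryKernel (κ : Kernel E (ℕ → E)) : Prop where
  ae_apply_zero : ∀ x, ∀ᵐ ω ∂(κ x), ω 0 = x
  map_shift_one : ∀ x, (κ x).map (shift 1) = (κ x).bind fun ω => κ (ω 1)

namespace IsTrajectoryKernel

variable {κ : Kernel E (ℕ → E)} {g : (ℕ → E) → ℝ≥0∞}

lemma lintegral_comp_shift_one (hκ : IsTrajectoryKernel κ) (hg : Measurable g) (x : E) :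
    ∫⁻ ω, g (shift 1 ω) ∂(κ x) = ∫⁻ ω, ∫⁻ ω', g ω' ∂(κ (ω 1)) ∂(κ x) := by
  have hκ1 : Measurable fun ω : ℕ → E => κ (ω 1) := κ.measurable.comp (measurable_pi_apply 1)
  rw [← lintegral_map hg (measurable_shift 1), hκ.map_shift_one,
    Measure.lintegral_bind hκ1.aemeasurable hg.aemeasurable]

lemma lintegral_comp_shift [IsMarkovKernel κ] (hκ : IsTrajectoryKernel κ) (hg : Measurable g)
    (n : ℕ) (x : E) :
    ∫⁻ ω, g (shift n ω) ∂(κ x) = ∫⁻ ω, ∫⁻ ω', g ω' ∂(κ (ω n)) ∂(κ x) := by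
  induction n generalizing x with
  | zero =>
    symm
    rw [lintegral_congr_ae ((hκ.ae_apply_zero x).mono fun ω hω => by rw [hω]),
      lintegral_const, measure_univ, mul_one]
    rfl
  | succ n ih =>
    have hgn : Measurable fun ω : ℕ → E => ∫⁻ ω', g ω' ∂(κ (ω n)) :=
      ((Measure.measurable_lintegral hg).comp κ.measurable).comp (measurable_pi_apply n)
    calc ∫⁻ ω, g (shift (n + 1) ω) ∂(κ x)
        = ∫⁻ ω, (g ∘ shift n) (shift 1 ω) ∂(κ x) := rfl
      _ = ∫⁻ ω, ∫⁻ ω', g (shift n ω') ∂(κ (ω 1)) ∂(κ x) :=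
        hκ.lintegral_comp_shift_one (hg.comp (measurable_shift n)) x
      _ = ∫⁻ ω, ∫⁻ ω', ∫⁻ ω'', g ω'' ∂(κ (ω' n)) ∂(κ (ω 1)) ∂(κ x) :=
        lintegral_congr fun ω => ih (ω 1)
      _ = ∫⁻ ω, ∫⁻ ω', g ω' ∂(κ (ω (n + 1))) ∂(κ x) :=
        (hκ.lintegral_comp_shift_one hgn x).symm

variable [IsMarkovKernel κ] {φ : E → ℝ≥0∞} {C δ : ℝ≥0∞}

lemma lintegral_ite_tail_le (hκ : IsTrajectoryKernel κ) (hφ : Measurable φ)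
    (hδ : ∀ y, δ ≤ κ y {ω | ∑' i, φ (ω i) ≤ C}) (n : ℕ) (x : E) :
    ∫⁻ ω, (if C < ∑' i, φ (ω (i + n)) then φ (ω n) else 0) ∂(κ x)
      ≤ (1 - δ) * ∫⁻ ω, φ (ω n) ∂(κ x) := by
  have hφn (n : ℕ) : Measurable fun ω : ℕ → E => φ (ω n) := hφ.comp (measurable_pi_apply n)
  have hS : Measurable fun ω : ℕ → E => ∑' i, φ (ω i) := .tsum hφn
  set A : Set (ℕ → E) := {ω | C < ∑' i, φ (ω i)}
  have hA : MeasurableSet A := measurableSet_lt measurable_const hS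
  set G : (ℕ → E) → ℝ≥0∞ := A.indicator fun ω => φ (ω 0)
  have hG_le (y : E) : ∫⁻ ω, G ω ∂(κ y) ≤ φ y * (1 - δ) := by
    have hA_le : κ y A ≤ 1 - δ := by
      have hAc : A = {ω | ∑' i, φ (ω i) ≤ C}ᶜ := by ext; simp [A]
      rw [hAc, prob_compl_eq_one_sub (measurableSet_le hS measurable_const)]
      exact tsub_le_tsub_left (hδ y) 1
    calc ∫⁻ ω, G ω ∂(κ y) = ∫⁻ ω, A.indicator (fun _ => φ y) ω ∂(κ y) :=
          lintegral_congr_ae <| (hκ.ae_apply_zero y).mono fun ω hω => by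
            simp only [G, Set.indicator_apply, hω]
      _ ≤ φ y * (1 - δ) := by rw [lintegral_indicator_const hA]; gcongr
  calc ∫⁻ ω, (if C < ∑' i, φ (ω (i + n)) then φ (ω n) else 0) ∂(κ x)
      = ∫⁻ ω, G (shift n ω) ∂(κ x) := by
        simp only [G, A, Set.indicator_apply, Set.mem_ofPred_eq, shift, zero_add]
    _ = ∫⁻ ω, ∫⁻ ω', G ω' ∂(κ (ω n)) ∂(κ x) :=
        hκ.lintegral_comp_shift ((hφn 0).indicator hA) n x
    _ ≤ ∫⁻ ω, φ (ω n) * (1 - δ) ∂(κ x) := lintegral_mono fun ω => hG_le (ω n)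
    _ = (1 - δ) * ∫⁻ ω, φ (ω n) ∂(κ x) := by rw [lintegral_mul_const _ (hφn n), mul_comm]

lemma lintegral_tsum_le_div (hκ : IsTrajectoryKernel κ) (hφ : Measurable φ)
    (hφC : ∀ y, φ y ≤ C) (hC : C ≠ ∞) (hδ0 : δ ≠ 0)
    (hδ : ∀ y, δ ≤ κ y {ω | ∑' i, φ (ω i) ≤ C}) (x : E) :
    ∫⁻ ω, ∑' n, φ (ω n) ∂(κ x) ≤ C / δ := by
  have hφn (n : ℕ) : Measurable fun ω : ℕ → E => φ (ω n) := hφ.comp (measurable_pi_apply n)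
  rw [lintegral_tsum fun n => (hφn n).aemeasurable, ENNReal.tsum_eq_iSup_nat]
  refine iSup_le fun N => ?_
  have hfin : ∑ n ∈ range N, ∫⁻ ω, φ (ω n) ∂(κ x) ≠ ∞ := by
    refine ne_top_of_le_ne_top (ENNReal.mul_ne_top (ENNReal.natCast_ne_top N) hC) ?_
    calc ∑ n ∈ range N, ∫⁻ ω, φ (ω n) ∂(κ x) ≤ ∑ n ∈ range N, ∫⁻ _, C ∂(κ x) := by
          gcongr with n; exact hφC _
      _ = N * C := by simp
  refine ENNReal.le_div_of_le_add_one_sub_mul hfin hδ0 ((hδ x).trans prob_le_one) ?_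
  have hexcess (n : ℕ) : Measurable fun ω : ℕ → E =>
      if C < ∑' i, φ (ω (i + n)) then φ (ω n) else 0 :=
    .ite (measurableSet_lt measurable_const (.tsum fun i => hφn (i + n))) (hφn n)
      measurable_const
  calc ∑ n ∈ range N, ∫⁻ ω, φ (ω n) ∂(κ x)
      = ∫⁻ ω, ∑ n ∈ range N, φ (ω n) ∂(κ x) :=
        (lintegral_finsetSum _ fun n _ => hφn n).symm
    _ ≤ ∫⁻ ω, C + ∑ n ∈ range N,
          (if C < ∑' i, φ (ω (i + n)) then φ (ω n) else 0) ∂(κ x) :=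
        lintegral_mono fun ω => ENNReal.sum_range_le_add_sum_ite_lt_tsum _ C N
    _ = C + ∑ n ∈ range N,
          ∫⁻ ω, (if C < ∑' i, φ (ω (i + n)) then φ (ω n) else 0) ∂(κ x) := by
        rw [lintegral_add_left measurable_const, lintegral_const, measure_univ, mul_one,
          lintegral_finsetSum _ fun n _ => hexcess n]
    _ ≤ C + ∑ n ∈ range N, (1 - δ) * ∫⁻ ω, φ (ω n) ∂(κ x) := by
        gcongr with n
        exact hκ.lintegral_ite_tail_le hφ hδ n x
    _ = C + (1 - δ) * ∑ n ∈ range N, ∫⁻ ω, φ (ω n) ∂(κ x) := by rw [mul_sum]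

end IsTrajectoryKernel

end MarkovChain

open MarkovChain

theorem stmt10_general {E : Type*} [MeasurableSpace E]
    (κ : Kernel E (ℕ → E)) [IsMarkovKernel κ]
    (h0 : ∀ x : E, ∀ᵐ ω ∂(κ x), ω 0 = x)
    (hMarkov : ∀ x : E,
      Measure.map (fun ω n => ω (n + 1)) (κ x) = (κ x).bind fun ω => κ (ω 1))
    (φ : E → ENNReal) (hφm : Measurable φ)
    (C : ENNReal) (hC : C ≠ ⊤) (hφC : ∀ x, φ x ≤ C)
    (δ : ENNReal) (hδ : 0 < δ)
    (hhyp : ∀ x : E, δ ≤ κ x {ω | ∑' n, φ (ω n) ≤ C}) :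
    ∀ x : E, (∀ᵐ ω ∂(κ x), ∑' n, φ (ω n) < ⊤) ∧
      ∫⁻ ω, ∑' n, φ (ω n) ∂(κ x) ≤ C / δ := by
  intro x
  have hκ : IsTrajectoryKernel κ := ⟨h0, hMarkov⟩
  have hbound := hκ.lintegral_tsum_le_div hφm hφC hC hδ.ne' hhyp x
  have hsum : Measurable fun ω : ℕ → E => ∑' n, φ (ω n) :=
    .tsum fun n => hφm.comp (measurable_pi_apply n)
  exact ⟨ae_lt_top hsum (ne_top_of_le_ne_top (ENNReal.div_ne_top hC hδ.ne') hbound), hbound⟩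

/-- Let `κ x` be the law of the trajectory of a homogeneous Markov chain started at
`x` (so `κ x`-a.s. `ω 0 = x`, and the law of the shifted trajectory is the mixture
of the laws started at `ω 1`). If `φ : E → [0, C]` is measurable and for every
starting point `x` the probability that `∑ₙ φ(Xₙ) ≤ C` is at least `δ > 0`, then
`∑ₙ φ(Xₙ)` is a.s. finite, integrable, and its expectation is at most `C / δ`. -/
theorem stmt10 {E : Type*} [MeasurableSpace E]
    (κ : Kernel E (ℕ → E)) [IsMarkovKernel κ]
    (h0 : ∀ x : E, ∀ᵐ ω ∂(κ x), ω 0 = x)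
    (hMarkov : ∀ x : E,
      Measure.map (fun ω n => ω (n + 1)) (κ x) = (κ x).bind fun ω => κ (ω 1))
    (φ : E → ENNReal) (hφm : Measurable φ)
    (C : ENNReal) (hC0 : 0 < C) (hC : C ≠ ⊤) (hφC : ∀ x, φ x ≤ C)
    (δ : ENNReal) (hδ : 0 < δ)
    (hhyp : ∀ x : E, δ ≤ κ x {ω | ∑' n, φ (ω n) ≤ C}) :
    ∀ x : E, (∀ᵐ ω ∂(κ x), ∑' n, φ (ω n) < ⊤) ∧
      ∫⁻ ω, ∑' n, φ (ω n) ∂(κ x) ≤ C / δ :=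
  stmt10_general κ h0 hMarkov φ hφm C hC hφC δ hδ hhyp
end

section
/- Let (E_n) be a sequence of finite subsets of a compact metric space K, all of the same cardinality m−1, such that there exists ε₀ > 0 with d(x,y) ≥ ε₀ for all distinct x, y in each E_n. If Σ_{n≥0} sup_{x ∈ E_{n+1}} d(x, E_n) < +∞, then Σ_{n≥0} d_H(E_n, E_{n+1}) < +∞, and consequently (E_n) converges in the Hausdorff metric. -/
/-!
Once the one-sided deviation `sup_{x ∈ E (n+1)} d(x, E n)` drops below `ε₀ / 2`, the
nearest-point map `E (n+1) → E n` is injective by the `ε₀`-separation, hence onto since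
both sets have the same cardinality; so every point of `E n` is also within that deviation
of `E (n+1)`, and the Hausdorff distance is bounded by the one-sided one. Summable Hausdorff
distances make `n ↦ E n` Cauchy in the complete space of nonempty compact subsets.
-/

open Metric Filter Topology TopologicalSpace

theorem Set.Finite.le_ciSup₂ {α β : Type*} [ConditionallyCompleteLattice β] {S : Set α}
    (hS : S.Finite) (f : α → β) {x : α} (hx : x ∈ S) : f x ≤ ⨆ y ∈ S, f y := by
  have : Nonempty β := ⟨f x⟩
  refine _root_.le_ciSup₂ (f := fun y (_ : y ∈ S) => f y) ((hS.image f).bddAbove.mono ?_) x hx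
  simp only [Set.iUnion_subset_iff, Set.range_subset_iff]
  exact fun y hy => Set.mem_image_of_mem f hy

section

variable {X : Type*} [MetricSpace X]

theorem injOn_of_dist_le_of_separated {B : Set X} {ε r : ℝ}
    (hsep : ∀ x ∈ B, ∀ y ∈ B, x ≠ y → ε ≤ dist x y) (hr : r < ε / 2) {f : X → X}
    (hf : ∀ b ∈ B, dist b (f b) ≤ r) : Set.InjOn f B := by
  intro b₁ hb₁ b₂ hb₂ hf₁₂
  by_contra hne
  have : ε ≤ 2 * r := calc
    ε ≤ dist b₁ b₂ := hsep b₁ hb₁ b₂ hb₂ hne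
    _ ≤ dist b₁ (f b₂) + dist b₂ (f b₂) := dist_triangle_right _ _ _
    _ ≤ r + r := add_le_add (hf₁₂ ▸ hf b₁ hb₁) (hf b₂ hb₂)
    _ = 2 * r := by ring
  linarith

theorem hausdorffDist_le_of_forall_infDist_le_of_ncard_le {A B : Set X} (hA : A.Finite)
    (hAne : A.Nonempty) (hcard : A.ncard ≤ B.ncard) {ε r : ℝ}
    (hsep : ∀ x ∈ B, ∀ y ∈ B, x ≠ y → ε ≤ dist x y) (hr : r < ε / 2)
    (h : ∀ b ∈ B, infDist b A ≤ r) : hausdorffDist A B ≤ r := by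
  obtain ⟨b₀, hb₀⟩ : B.Nonempty :=
    Set.nonempty_of_ncard_ne_zero ((Set.ncard_pos hA).2 hAne |>.trans_le hcard).ne'
  choose f hfA hfd using fun x => hA.isCompact.exists_infDist_eq_dist hAne x
  have hf : ∀ b ∈ B, dist b (f b) ≤ r := fun b hb => hfd b ▸ h b hb
  have hsurj : f '' B = A := by
    refine Set.eq_of_subset_of_ncard_le (Set.image_subset_iff.2 fun x _ => hfA x) ?_ hA
    rwa [(injOn_of_dist_le_of_separated hsep hr hf).ncard_image]
  refine hausdorffDist_le_of_infDist (infDist_nonneg.trans (h b₀ hb₀)) ?_ h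
  rw [← hsurj]
  rintro _ ⟨b, hb, rfl⟩
  exact (infDist_le_dist_of_mem hb).trans (dist_comm (f b) b ▸ hf b hb)

theorem exists_tendsto_hausdorffDist_of_summable [CompleteSpace X] {E : ℕ → Set X}
    (hE : ∀ n, IsCompact (E n)) (hne : ∀ n, (E n).Nonempty)
    (hsum : Summable fun n => hausdorffDist (E n) (E (n + 1))) :
    ∃ L : Set X, L.Nonempty ∧ IsCompact L ∧
      Tendsto (fun n => hausdorffDist (E n) L) atTop (𝓝 0) := by
  let F : ℕ → NonemptyCompacts X := fun n => ⟨⟨E n, hE n⟩, hne n⟩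
  have hF : CauchySeq F :=
    cauchySeq_of_dist_le_of_summable _ (fun n => NonemptyCompacts.dist_eq.le) hsum
  obtain ⟨L, hL⟩ := cauchySeq_tendsto_of_complete hF
  exact ⟨L, L.nonempty, L.isCompact, tendsto_iff_dist_tendsto_zero.1 hL⟩

end

/-- For a sequence of `ε₀`-separated finite subsets of constant cardinality of a
compact metric space, summability of the one-sided deviations implies summability of
the Hausdorff distances, hence convergence in the Hausdorff metric. -/
theorem stmt12 {K : Type*} [MetricSpace K] [CompactSpace K]
    (E : ℕ → Set K) (m : ℕ) (hm : 0 < m)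
    (hfin : ∀ n, (E n).Finite) (hcard : ∀ n, (E n).ncard = m)
    (ε₀ : ℝ) (hε₀ : 0 < ε₀)
    (hsep : ∀ n, ∀ x ∈ E n, ∀ y ∈ E n, x ≠ y → ε₀ ≤ dist x y)
    (hsum : Summable fun n => ⨆ x ∈ E (n + 1), infDist x (E n)) :
    (Summable fun n => hausdorffDist (E n) (E (n + 1))) ∧
      ∃ L : Set K, L.Nonempty ∧ IsCompact L ∧
        Tendsto (fun n => hausdorffDist (E n) L) atTop (nhds 0) := by
  have hne : ∀ n, (E n).Nonempty := fun n =>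
    Set.nonempty_of_ncard_ne_zero ((hcard n).trans_ne hm.ne')
  have hsmall : ∀ᶠ n in atTop, (⨆ x ∈ E (n + 1), infDist x (E n)) < ε₀ / 2 :=
    hsum.tendsto_atTop_zero.eventually (gt_mem_nhds (half_pos hε₀))
  have hhaus : Summable fun n => hausdorffDist (E n) (E (n + 1)) := by
    refine hsum.of_norm_bounded_eventually_nat (hsmall.mono fun n hn => ?_)
    rw [Real.norm_of_nonneg hausdorffDist_nonneg]
    exact hausdorffDist_le_of_forall_infDist_le_of_ncard_le (hfin n) (hne n)
      (by rw [hcard, hcard]) (hsep (n + 1)) hn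
      fun x hx => (hfin (n + 1)).le_ciSup₂ (infDist · (E n)) hx
  exact ⟨hhaus, exists_tendsto_hausdorffDist_of_summable (fun n => (hfin n).isCompact) hne hhaus⟩
end

section
/- Let (X, d) be a compact metric space and f : X → X a map which is locally contracting: there exists δ > 0 such that d(x,y) ≤ δ implies d(f(x), f(y)) < d(x,y) for all x ≠ y. Then f has only finitely many periodic orbits, and every forward orbit of f converges to a periodic orbit. -/
open Filter Topology

/-- A locally contracting map of a compact metric space has finitely many periodic
points, and every forward orbit converges to a periodic orbit. -/
theorem stmt16 {X : Type*} [MetricSpace X] [CompactSpace X]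
    (f : X → X) (δ : ℝ) (hδ : 0 < δ)
    (hf : ∀ x y : X, x ≠ y → dist x y ≤ δ → dist (f x) (f y) < dist x y) :
    {x : X | ∃ n : ℕ, 0 < n ∧ f^[n] x = x}.Finite ∧
      ∀ x : X, ∃ p : X, (∃ n : ℕ, 0 < n ∧ f^[n] p = p) ∧
        Filter.Tendsto (fun n => dist (f^[n] x) (f^[n] p)) Filter.atTop (nhds 0) := by
  -- weak contraction on the δ-neighborhood of the diagonal
  have hle : ∀ x y : X, dist x y ≤ δ → dist (f x) (f y) ≤ dist x y := by
    intro x y h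
    rcases eq_or_ne x y with rfl | hxy
    · simp
    · exact (hf x y hxy h).le
  -- continuity of f
  have hc : Continuous f := by
    rw [Metric.continuous_iff]
    intro x ε hε
    refine ⟨min δ ε, lt_min hδ hε, fun y hy => ?_⟩
    calc dist (f y) (f x) ≤ dist y x := hle y x (hy.trans_le (min_le_left _ _)).le
      _ < min δ ε := hy
      _ ≤ ε := min_le_right _ _
  -- Lemma A: points within δ have orbits that approach each other
  have lemA : ∀ a b : X, dist a b ≤ δ →
      Tendsto (fun n => dist (f^[n] a) (f^[n] b)) atTop (𝓝 0) := by
    intro a b hab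
    set g : ℕ → ℝ := fun n => dist (f^[n] a) (f^[n] b) with hg
    have hstep : ∀ n, g n ≤ δ → g (n + 1) ≤ g n := by
      intro n h
      simpa [g, Function.iterate_succ_apply'] using hle _ _ h
    have hgδ : ∀ n, g n ≤ δ := by
      intro n
      induction n with
      | zero => simpa [g] using hab
      | succ n ih => exact (hstep n ih).trans ih
    have hanti : Antitone g := antitone_nat_of_succ_le fun n => hstep n (hgδ n)
    have hbdd : BddBelow (Set.range g) := ⟨0, by rintro _ ⟨n, rfl⟩; exact dist_nonneg⟩
    set L := ⨅ n, g n with hL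
    have hgL : Tendsto g atTop (𝓝 L) := tendsto_atTop_ciInf hanti hbdd
    have hL0 : 0 ≤ L := le_ciInf fun n => dist_nonneg
    have hLle : ∀ n, L ≤ g n := fun n => ciInf_le hbdd n
    rcases eq_or_lt_of_le hL0 with h0 | hpos
    · rw [← h0] at hgL; exact hgL
    · exfalso
      obtain ⟨⟨u, v⟩, -, φ, hφ, hlim⟩ :=
        isCompact_univ.tendsto_subseq (x := fun n => (f^[n] a, f^[n] b))
          (fun n => Set.mem_univ _)
      have h1 : Tendsto (g ∘ φ) atTop (𝓝 L) := hgL.comp hφ.tendsto_atTop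
      have h2 : Tendsto (g ∘ φ) atTop (𝓝 (dist u v)) := by
        have hcd : Continuous fun p : X × X => dist p.1 p.2 :=
          continuous_fst.dist continuous_snd
        exact (hcd.tendsto (u, v)).comp hlim
      have huvL : dist u v = L := tendsto_nhds_unique h2 h1
      have huv : u ≠ v := by
        rw [← dist_pos, huvL]; exact hpos
      have hLδ : L ≤ δ := (hLle 0).trans (hgδ 0)
      have hfc : dist (f u) (f v) < L := by
        have := hf u v huv (by rw [huvL] at *; exact huvL ▸ hLδ)
        rwa [huvL] at this
      have h3 : Tendsto (fun j => g (φ j + 1)) atTop (𝓝 (dist (f u) (f v))) := by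
        have hcd : Continuous fun p : X × X => dist (f p.1) (f p.2) :=
          (hc.comp continuous_fst).dist (hc.comp continuous_snd)
        have := (hcd.tendsto (u, v)).comp hlim
        refine this.congr fun j => ?_
        simp [g, Function.iterate_succ_apply', Function.comp]
      have : L ≤ dist (f u) (f v) := ge_of_tendsto' h3 fun j => hLle _
      linarith
  -- multiples of a period are periods
  have hfix : ∀ (z : X) (m j : ℕ), f^[m] z = z → f^[m * j] z = z := by
    intro z m j h
    rw [Function.iterate_mul]
    exact Function.iterate_fixed h j
  constructor
  · -- finiteness of periodic points
    by_contra hinf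
    set e := Set.Infinite.natEmbedding _ hinf with he
    set u : ℕ → X := fun n => (e n : X) with hu
    have huinj : Function.Injective u := fun i j h => e.injective (Subtype.ext h)
    have huP : ∀ n, ∃ m : ℕ, 0 < m ∧ f^[m] (u n) = u n := fun n => (e n).2
    obtain ⟨q, -, φ, hφ, hlim⟩ :=
      isCompact_univ.tendsto_subseq (x := u) (fun n => Set.mem_univ _)
    obtain ⟨N, hN⟩ := Metric.tendsto_atTop.mp hlim (δ / 2) (by linarith)
    set p1 := u (φ N) with hp1
    set p2 := u (φ (N + 1)) with hp2
    have hne : p1 ≠ p2 := by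
      intro h
      have := hφ.injective (huinj h)
      omega
    have hd12 : dist p1 p2 ≤ δ := by
      calc dist p1 p2 ≤ dist p1 q + dist q p2 := dist_triangle _ _ _
        _ ≤ δ / 2 + δ / 2 := by
            refine add_le_add (hN N le_rfl).le ?_
            rw [dist_comm]; exact (hN (N + 1) (Nat.le_succ N)).le
        _ = δ := by ring
    obtain ⟨a, ha0, hpa⟩ := huP (φ N)
    obtain ⟨b, hb0, hpb⟩ := huP (φ (N + 1))
    have hAB := lemA p1 p2 hd12
    have hmul : Tendsto (fun j => j * (a * b)) atTop atTop :=
      tendsto_atTop_mono (fun j => Nat.le_mul_of_pos_right j (by positivity)) tendsto_id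
    have hcomp : Tendsto (fun j => dist (f^[j * (a * b)] p1) (f^[j * (a * b)] p2))
        atTop (𝓝 0) := hAB.comp hmul
    have heq : ∀ j : ℕ, dist (f^[j * (a * b)] p1) (f^[j * (a * b)] p2) = dist p1 p2 := by
      intro j
      have e1 : f^[j * (a * b)] p1 = p1 := by
        have : j * (a * b) = a * (j * b) := by ring
        rw [this]; exact hfix p1 a (j * b) hpa
      have e2 : f^[j * (a * b)] p2 = p2 := by
        have : j * (a * b) = b * (j * a) := by ring
        rw [this]; exact hfix p2 b (j * a) hpb
      rw [e1, e2]
    have : dist p1 p2 = 0 := by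
      refine tendsto_nhds_unique ?_ hcomp
      exact tendsto_const_nhds.congr fun j => (heq j).symm
    exact hne (dist_eq_zero.mp this)
  · -- convergence of every orbit to a periodic orbit
    intro x
    -- Lemma B: two iterates within δ
    obtain ⟨n0, m0, hnm, hd⟩ : ∃ n m : ℕ, n < m ∧ dist (f^[n] x) (f^[m] x) ≤ δ := by
      obtain ⟨q, -, φ, hφ, hlim⟩ :=
        isCompact_univ.tendsto_subseq (x := fun n => f^[n] x) (fun n => Set.mem_univ _)
      obtain ⟨N, hN⟩ := Metric.tendsto_atTop.mp hlim (δ / 2) (by linarith)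
      refine ⟨φ N, φ (N + 1), hφ (Nat.lt_succ_self N), ?_⟩
      calc dist (f^[φ N] x) (f^[φ (N + 1)] x)
          ≤ dist (f^[φ N] x) q + dist q (f^[φ (N + 1)] x) := dist_triangle _ _ _
        _ ≤ δ / 2 + δ / 2 := by
            refine add_le_add (hN N le_rfl).le ?_
            rw [dist_comm]; exact (hN (N + 1) (Nat.le_succ N)).le
        _ = δ := by ring
    set y := f^[n0] x with hy
    set k := m0 - n0 with hk
    have hk0 : 0 < k := Nat.sub_pos_of_lt hnm
    have hyk : f^[k] y = f^[m0] x := by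
      rw [hy, ← Function.iterate_add_apply]
      congr 1
      omega
    have hdy : dist y (f^[k] y) ≤ δ := by rw [hyk]; exact hd
    have hA : Tendsto (fun i => dist (f^[i] y) (f^[i + k] y)) atTop (𝓝 0) := by
      have := lemA y (f^[k] y) hdy
      refine this.congr fun i => ?_
      rw [Function.iterate_add_apply f i k y]
    obtain ⟨p, -, φ, hφ, hlim⟩ :=
      isCompact_univ.tendsto_subseq (x := fun i => f^[i * k] y) (fun i => Set.mem_univ _)
    have hφtop : Tendsto (fun j => φ j * k) atTop atTop :=
      tendsto_atTop_mono (fun j => Nat.le_mul_of_pos_right (φ j) hk0)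
        hφ.tendsto_atTop
    have hB : Tendsto (fun j => dist (f^[φ j * k] y) (f^[φ j * k + k] y)) atTop (𝓝 0) :=
      hA.comp hφtop
    have h1 : Tendsto (fun j => dist (f^[φ j * k] y) p) atTop (𝓝 0) :=
      tendsto_iff_dist_tendsto_zero.mp hlim
    -- p is periodic with period k
    have hpfix : f^[k] p = p := by
      have hfk2 : Tendsto (fun j => f^[k] (f^[φ j * k] y)) atTop (𝓝 (f^[k] p)) :=
        ((hc.iterate k).tendsto p).comp hlim
      have hfk : Tendsto (fun j => f^[k] (f^[φ j * k] y)) atTop (𝓝 p) := by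
        rw [tendsto_iff_dist_tendsto_zero]
        refine squeeze_zero
          (g := fun j => dist (f^[k] (f^[φ j * k] y)) (f^[φ j * k] y) + dist (f^[φ j * k] y) p)
          (fun j => dist_nonneg) (fun j => dist_triangle _ _ _) ?_
        have hB' : Tendsto (fun j => dist (f^[k] (f^[φ j * k] y)) (f^[φ j * k] y))
              atTop (𝓝 0) := by
            refine hB.congr fun j => ?_
            rw [dist_comm, ← Function.iterate_add_apply f k (φ j * k) y, Nat.add_comm k (φ j * k)]
        simpa using hB'.add h1
      exact tendsto_nhds_unique hfk2 hfk
    -- choose an index with the orbit within δ of p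
    obtain ⟨J, hJ⟩ := Metric.tendsto_atTop.mp hlim δ hδ
    have hJδ : dist (f^[φ J * k] y) p ≤ δ := (hJ J le_rfl).le
    set M := φ J * k + n0 with hM
    have hMx : f^[M] x = f^[φ J * k] y := by
      rw [hy, hM, ← Function.iterate_add_apply]
    have hC : Tendsto (fun n => dist (f^[n] (f^[φ J * k] y)) (f^[n] p)) atTop (𝓝 0) :=
      lemA _ _ hJδ
    -- shift p to align the orbits
    set c := k * M - M with hc'
    have hMle : M ≤ k * M := Nat.le_mul_of_pos_left M hk0
    have hkM : f^[k * M] p = p := hfix p k M hpfix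
    set p' := f^[c] p with hp'
    have hshift : ∀ n, f^[M + n] p' = f^[n] p := by
      intro n
      have hsum : M + n + c = n + k * M := by omega
      calc f^[M + n] (f^[c] p) = f^[M + n + c] p :=
            (Function.iterate_add_apply f (M + n) c p).symm
        _ = f^[n + k * M] p := by rw [hsum]
        _ = f^[n] (f^[k * M] p) := Function.iterate_add_apply f n (k * M) p
        _ = f^[n] p := by rw [hkM]
    refine ⟨p', ⟨k, hk0, ?_⟩, ?_⟩
    · -- p' is periodic
      calc f^[k] (f^[c] p) = f^[k + c] p := (Function.iterate_add_apply f k c p).symm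
        _ = f^[c + k] p := by rw [Nat.add_comm]
        _ = f^[c] (f^[k] p) := Function.iterate_add_apply f c k p
        _ = f^[c] p := by rw [hpfix]
    · rw [← tendsto_add_atTop_iff_nat M]
      refine hC.congr fun n => ?_
      have e1 : f^[n + M] x = f^[n] (f^[φ J * k] y) := by
        rw [Function.iterate_add_apply, hMx]
      have e2 : f^[n + M] p' = f^[n] p := by rw [Nat.add_comm n M, hshift n]
      rw [e1, e2]
end

section
/- Let (X,d) be a compact metric space and f : X → X continuous with the property that there is δ > 0 with d(f(x),f(y)) < d(x,y) whenever 0 < d(x,y) ≤ δ. Then for any x, y ∈ X with d(x,y) ≤ δ, the sequence d(f^n(x), f^n(y)) is nonincreasing and converges to 0. -/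
/-- First step of the local-contraction lemma: for a continuous map which strictly
contracts pairs at distance in `(0, δ]`, any two points at distance at most `δ` have
orbits whose mutual distance is nonincreasing and converges to `0`. -/
theorem stmt17 {X : Type*} [MetricSpace X] [CompactSpace X]
    (f : X → X) (hfc : Continuous f) (δ : ℝ) (hδ : 0 < δ)
    (hf : ∀ x y : X, 0 < dist x y → dist x y ≤ δ → dist (f x) (f y) < dist x y)
    (x y : X) (hxy : dist x y ≤ δ) :
    Antitone (fun n => dist (f^[n] x) (f^[n] y)) ∧
      Filter.Tendsto (fun n => dist (f^[n] x) (f^[n] y)) Filter.atTop (nhds 0) := by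
  set a : ℕ → ℝ := fun n => dist (f^[n] x) (f^[n] y) with ha
  -- step lemma: a (n+1) ≤ a n given a n ≤ δ
  have step : ∀ u v : X, dist u v ≤ δ → dist (f u) (f v) ≤ dist u v := by
    intro u v huv
    rcases eq_or_lt_of_le (dist_nonneg (x := u) (y := v)) with h | h
    · have : u = v := by rw [← dist_eq_zero]; exact h.symm
      simp [this]
    · exact (hf u v h huv).le
  have hbd : ∀ n, a n ≤ δ := by
    intro n
    induction n with
    | zero => simpa [ha] using hxy
    | succ n ih =>
      have := step (f^[n] x) (f^[n] y) ih
      simp only [ha, Function.iterate_succ_apply'] at *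
      exact le_trans this ih
  have hanti : Antitone a := by
    apply antitone_nat_of_succ_le
    intro n
    have := step (f^[n] x) (f^[n] y) (hbd n)
    simpa [ha, Function.iterate_succ_apply'] using this
  refine ⟨hanti, ?_⟩
  -- convergence to some L
  have hnn : ∀ n, 0 ≤ a n := fun n => dist_nonneg
  obtain ⟨L, hL⟩ := tendsto_of_antitone hanti |>.resolve_left
    (fun h => absurd (h.eventually (Filter.eventually_lt_atBot 0))
      (by simp only [Filter.eventually_atTop, not_exists]
          intro N hN
          exact absurd (hN N le_rfl) (not_lt.2 (hnn N))))
  have hLnn : 0 ≤ L := le_of_tendsto_of_tendsto tendsto_const_nhds hL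
    (Filter.Eventually.of_forall hnn)
  rcases eq_or_lt_of_le hLnn with h0 | hLpos
  · rwa [← h0] at hL
  exfalso
  -- extract a convergent subsequence of the pair sequence
  obtain ⟨p, -, φ, hφ, hconv⟩ := IsCompact.tendsto_subseq (x := fun n => (f^[n] x, f^[n] y))
    (isCompact_univ (X := X × X)) (fun n => Set.mem_univ _)
  have h1 : Filter.Tendsto (fun k => f^[φ k] x) Filter.atTop (nhds p.1) :=
    (continuous_fst.tendsto p).comp hconv
  have h2 : Filter.Tendsto (fun k => f^[φ k] y) Filter.atTop (nhds p.2) :=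
    (continuous_snd.tendsto p).comp hconv
  have hdist : Filter.Tendsto (fun k => a (φ k)) Filter.atTop (nhds (dist p.1 p.2)) :=
    (h1.dist h2)
  have hLsub : Filter.Tendsto (fun k => a (φ k)) Filter.atTop (nhds L) :=
    hL.comp hφ.tendsto_atTop
  have hLeq : dist p.1 p.2 = L := tendsto_nhds_unique hdist hLsub
  have hdle : dist p.1 p.2 ≤ δ :=
    le_of_tendsto hdist (Filter.Eventually.of_forall (fun k => hbd (φ k)))
  have hcontr : dist (f p.1) (f p.2) < L := by
    rw [← hLeq] at hLpos ⊢
    exact hf p.1 p.2 hLpos hdle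
  -- but a (φ k + 1) tends to dist (f p.1) (f p.2) and to L
  have hd2 : Filter.Tendsto (fun k => a (φ k + 1)) Filter.atTop
      (nhds (dist (f p.1) (f p.2))) := by
    have : (fun k => a (φ k + 1)) = fun k => dist (f (f^[φ k] x)) (f (f^[φ k] y)) := by
      funext k; simp [ha, Function.iterate_succ_apply']
    rw [this]
    exact ((hfc.tendsto p.1).comp h1).dist ((hfc.tendsto p.2).comp h2)
  have hL2 : Filter.Tendsto (fun k => a (φ k + 1)) Filter.atTop (nhds L) :=
    hL.comp ((Filter.tendsto_add_atTop_nat 1).comp hφ.tendsto_atTop)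
  exact absurd (tendsto_nhds_unique hd2 hL2) (ne_of_lt hcontr)
end

section
/- Let K ⊆ ℝ be compact, (g_n) a sequence of homeomorphisms of K, and suppose K is covered by finitely many sets B₁,…,B_r with chosen points x_i ∈ B_i, such that for all large n each diam(g_n(B_i)) ≤ e^{−nλ}, and for each pair (i,j) either d(g_n(x_i), g_n(x_j)) ≤ e^{−nλ} for all large n or d(g_n(x_i), g_n(x_j)) ≥ δ for all large n. Then there exists m depending only on diam(K) and δ (not on r or (g_n)) such that for all large n, g_n(B₁ ∪ … ∪ B_r) is contained in a union of m balls of radius e^{−nλ/2}. -/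
open Filter

lemma sep_card (s : Finset ℝ) (δ D : ℝ) (hδ : 0 < δ) (hD : 0 ≤ D)
    (hsep : ∀ a ∈ s, ∀ b ∈ s, a ≠ b → δ ≤ dist a b)
    (hdiam : ∀ a ∈ s, ∀ b ∈ s, dist a b ≤ D) :
    (s.card : ℝ) ≤ D / δ + 1 := by
  rcases Nat.eq_zero_or_pos s.card with h | h
  · rw [h]; push_cast; positivity
  · set n := s.card with hn
    let e := s.orderIsoOfFin rfl
    have key : ∀ k : ℕ, ∀ hk : k < n, (k : ℝ) * δ ≤ (e ⟨k, hk⟩ : ℝ) - (e ⟨0, h⟩ : ℝ) := by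
      intro k
      induction k with
      | zero => intro hk; simp
      | succ k ih =>
        intro hk
        have hk' : k < n := Nat.lt_of_succ_lt hk
        have h1 := ih hk'
        have hlt : (e ⟨k, hk'⟩ : ℝ) < (e ⟨k+1, hk⟩ : ℝ) := by
          exact_mod_cast e.strictMono (show (⟨k,hk'⟩ : Fin n) < ⟨k+1,hk⟩ by
            simp [Fin.lt_def])
        have hsep' : δ ≤ dist ((e ⟨k+1,hk⟩ : ℝ)) ((e ⟨k,hk'⟩ : ℝ)) :=
          hsep _ (e ⟨k+1,hk⟩).2 _ (e ⟨k,hk'⟩).2 (ne_of_gt hlt)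
        rw [Real.dist_eq, abs_of_pos (by linarith)] at hsep'
        push_cast
        linarith
    have hkey := key (n-1) (by omega)
    have hd := hdiam _ (e ⟨n-1, by omega⟩).2 _ (e ⟨0,h⟩).2
    rw [Real.dist_eq] at hd
    have habs := le_abs_self ((e ⟨n-1, by omega⟩ : ℝ) - (e ⟨0,h⟩ : ℝ))
    have hc : ((n-1 : ℕ) : ℝ) = (n : ℝ) - 1 := by
      push_cast [Nat.cast_sub h]; ring
    rw [hc] at hkey
    have h2 : ((n:ℝ)-1)*δ ≤ D := by linarith
    have h3 : (n:ℝ)-1 ≤ D/δ := (le_div_iff₀ hδ).2 h2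
    linarith

/-- If `K ⊆ ℝ` compact is covered by sets `B₁, …, B_r` whose images under `g n`
have diameter at most `e^{-nλ}` for large `n`, and the marked points satisfy the
synchronization/separation dichotomy, then for large `n` the image
`g n (B₁ ∪ ⋯ ∪ B_r)` is contained in a union of `m` balls of radius `e^{-nλ/2}`,
where `m` depends only on `diam K` and `δ`. -/
theorem stmt19 (K : Set ℝ) (hK : IsCompact K)
    (lam δ : ℝ) (hlam : 0 < lam) (hδ : 0 < δ)
    (r : ℕ) (B : Fin r → Set K) (x : Fin r → K) (hx : ∀ i, x i ∈ B i)
    (hcover : (⋃ i, B i) = Set.univ)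
    (g : ℕ → (K ≃ₜ K))
    (hdiam : ∀ᶠ n : ℕ in atTop, ∀ i,
      Metric.diam ((fun y : K => ((g n) y : ℝ)) '' B i) ≤ Real.exp (-(n : ℝ) * lam))
    (hdich : ∀ i j,
      (∀ᶠ n : ℕ in atTop,
        dist (((g n) (x i) : ℝ)) (((g n) (x j) : ℝ)) ≤ Real.exp (-(n : ℝ) * lam)) ∨
      (∀ᶠ n : ℕ in atTop,
        δ ≤ dist (((g n) (x i) : ℝ)) (((g n) (x j) : ℝ)))) :
    ∃ m : ℕ, (m : ℝ) ≤ Metric.diam K / δ + 1 ∧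
      ∀ᶠ n : ℕ in atTop, ∃ c : Fin m → ℝ,
        (fun y : K => ((g n) y : ℝ)) '' (⋃ i, B i) ⊆
          ⋃ k, Metric.ball (c k) (Real.exp (-(n : ℝ) * lam / 2)) := by
  classical
  set R : Fin r → Fin r → Prop := fun i j =>
    ∀ᶠ n : ℕ in atTop,
      dist (((g n) (x i) : ℝ)) (((g n) (x j) : ℝ)) ≤ Real.exp (-(n : ℝ) * lam) with hRdef
  -- exp(-nλ) → 0
  have hexp0 : Tendsto (fun n : ℕ => Real.exp (-(n:ℝ) * lam)) atTop (nhds 0) := by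
    apply Real.tendsto_exp_atBot.comp
    have : Tendsto (fun n : ℕ => (n:ℝ) * (-lam)) atTop atBot :=
      Tendsto.atTop_mul_const_of_neg (neg_lt_zero.2 hlam) tendsto_natCast_atTop_atTop
    simpa [mul_comm, neg_mul, mul_neg] using this
  have hRrefl : ∀ i, R i i := fun i =>
    Eventually.of_forall (fun n => by simp [Real.exp_pos, le_of_lt (Real.exp_pos _)])
  have hRsymm : ∀ {i j}, R i j → R j i := fun {i j} h => by
    filter_upwards [h] with n hn; rwa [dist_comm]
  have hRtrans : ∀ {i j k}, R i j → R j k → R i k := by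
    intro i j k h1 h2
    rcases hdich i k with h | h
    · exact h
    · exfalso
      have h3 : ∀ᶠ n : ℕ in atTop, δ ≤ 2 * Real.exp (-(n:ℝ)*lam) := by
        filter_upwards [h1, h2, h] with n a b c
        have := dist_triangle (((g n) (x i) : ℝ)) (((g n) (x j) : ℝ)) (((g n) (x k) : ℝ))
        linarith
      have h4 : ∀ᶠ n : ℕ in atTop, 2 * Real.exp (-(n:ℝ)*lam) < δ := by
        have := (hexp0.const_mul 2)
        rw [mul_zero] at this
        exact this.eventually_lt_const hδ
      obtain ⟨n, hn1, hn2⟩ := (h3.and h4).exists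
      linarith
  set st : Setoid (Fin r) := ⟨R, hRrefl, @hRsymm, @hRtrans⟩ with hst
  set m := Fintype.card (Quotient st) with hm
  set eqv : Fin m ≃ Quotient st := (Fintype.equivFin (Quotient st)).symm with heqv
  refine ⟨m, ?_, ?_⟩
  · -- cardinality bound
    have hout : ∀ q q' : Quotient st, q ≠ q' →
        ∀ᶠ n : ℕ in atTop,
          δ ≤ dist (((g n) (x q.out) : ℝ)) (((g n) (x q'.out) : ℝ)) := by
      intro q q' hne
      rcases hdich q.out q'.out with h | h
      · exfalso
        apply hne
        have : (Quotient.mk st q.out) = Quotient.mk st q'.out := Quotient.sound h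
        rwa [Quotient.out_eq, Quotient.out_eq] at this
      · exact h
    have hsep_ev : ∀ᶠ n : ℕ in atTop, ∀ q q' : Quotient st, q ≠ q' →
        δ ≤ dist (((g n) (x q.out) : ℝ)) (((g n) (x q'.out) : ℝ)) := by
      rw [eventually_all]
      intro q
      rw [eventually_all]
      intro q'
      by_cases h : q = q'
      · exact Eventually.of_forall (fun n h' => absurd h h')
      · filter_upwards [hout q q' h] with n hn _; exact hn
    obtain ⟨n₀, hn₀⟩ := hsep_ev.exists
    set p : Quotient st → ℝ := fun q => (((g n₀) (x q.out) : ℝ)) with hp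
    have hpinj : Function.Injective p := by
      intro q q' h
      by_contra hne
      have := hn₀ q q' hne
      rw [hp] at h
      simp only [h, dist_self] at this
      linarith
    have hcard : (Finset.univ.image p).card = m := by
      rw [Finset.card_image_of_injective _ hpinj, Finset.card_univ]
    have hmem : ∀ a ∈ Finset.univ.image p, a ∈ K := by
      intro a ha
      obtain ⟨q, _, rfl⟩ := Finset.mem_image.1 ha
      exact ((g n₀) (x q.out)).2
    rw [← hcard]
    apply sep_card _ _ _ hδ Metric.diam_nonneg
    · intro a ha b hb hab
      obtain ⟨q, _, rfl⟩ := Finset.mem_image.1 ha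
      obtain ⟨q', _, rfl⟩ := Finset.mem_image.1 hb
      exact hn₀ q q' (fun h => hab (by rw [h]))
    · intro a ha b hb
      exact Metric.dist_le_diam_of_mem hK.isBounded (hmem a ha) (hmem b hb)
  · -- eventual covering
    have hrel : ∀ᶠ n : ℕ in atTop, ∀ i : Fin r,
        dist (((g n) (x i) : ℝ)) (((g n) (x (Quotient.mk st i).out) : ℝ))
          ≤ Real.exp (-(n:ℝ)*lam) := by
      rw [eventually_all]
      intro i
      exact hRsymm (Quotient.mk_out i)
    have hsmall : ∀ᶠ n : ℕ in atTop,
        2 * Real.exp (-(n:ℝ)*lam) < Real.exp (-(n:ℝ)*lam/2) := by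
      have ht : Tendsto (fun n : ℕ => Real.exp ((n:ℝ) * (lam/2))) atTop atTop :=
        Real.tendsto_exp_atTop.comp
          (Tendsto.atTop_mul_const (half_pos hlam) tendsto_natCast_atTop_atTop)
      filter_upwards [ht.eventually_gt_atTop 2] with n hn
      have hkey : Real.exp (-(n:ℝ)*lam/2) =
          Real.exp (-(n:ℝ)*lam) * Real.exp ((n:ℝ)*(lam/2)) := by
        rw [← Real.exp_add]; ring_nf
      rw [hkey]
      nlinarith [Real.exp_pos (-(n:ℝ)*lam)]
    filter_upwards [hdiam, hrel, hsmall] with n hd hr hs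
    refine ⟨fun k => (((g n) (x (eqv k).out) : ℝ)), ?_⟩
    rintro z ⟨y, hy, rfl⟩
    obtain ⟨i, hi⟩ := Set.mem_iUnion.1 hy
    refine Set.mem_iUnion.2 ⟨eqv.symm (Quotient.mk st i), ?_⟩
    simp only [Metric.mem_ball, Equiv.apply_symm_apply]
    have e1 : dist (((g n) y : ℝ)) (((g n) (x i) : ℝ)) ≤ Real.exp (-(n:ℝ)*lam) := by
      have hb : Bornology.IsBounded ((fun y : K => ((g n) y : ℝ)) '' B i) := by
        apply hK.isBounded.subset
        rintro _ ⟨w, _, rfl⟩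
        exact ((g n) w).2
      exact le_trans (Metric.dist_le_diam_of_mem hb ⟨y, hi, rfl⟩ ⟨x i, hx i, rfl⟩) (hd i)
    have e2 := hr i
    have := dist_triangle (((g n) y : ℝ)) (((g n) (x i) : ℝ))
      (((g n) (x (Quotient.mk st i).out) : ℝ))
    linarith
end
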